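/- arXiv:math/0607545 — 8 statements merged into one kernel-verified Lean document; each statement's English description precedes it below -/
import Mathlib

section
/- Let 𝒳 be a finite set, C : 𝒳×𝒳 → [0,∞) symmetric, ω a probability measure on 𝒳, and ϖ a finite symmetric measure on 𝒳×𝒳. Then (1/2)·sup_g { Σ_{a,b} ϖ(a,b)g(a,b) + Σ_{a,b} C(a,b)ω(a)ω(b)(1 − e^{g(a,b)}) } = (1/2)·𝔥_C(ϖ‖ω), where the supremum is over all symmetric functions g : 𝒳×𝒳 → ℝ and both sides take values in [0,∞]. -/
open Filter Topology

namespace ColoredLDP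

noncomputable section

/-- Extended logarithm: `⊥` at nonpositive arguments. -/
def elog (x : ℝ) : EReal := if x ≤ 0 then (⊥ : EReal) else ((Real.log x : ℝ) : EReal)

open Classical in
/-- Relative entropy of finite measures on a finite set, with value `⊤` if
absolute continuity fails. -/
def relEntFin {Y : Type} [Fintype Y] (ν ρ : Y → ℝ) : EReal :=
  if ∀ y, ρ y = 0 → ν y = 0 then (((∑ y, ν y * Real.log (ν y / ρ y)) : ℝ) : EReal)
  else (⊤ : EReal)

open Classical in
/-- Relative entropy of measures on a countable set, with value `⊤` if absolute
continuity fails or the defining series is not (absolutely) summable. -/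
def relEntC {Y : Type} (ν ρ : Y → ℝ) : EReal :=
  if (∀ y, ρ y = 0 → ν y = 0) ∧ Summable (fun y => ν y * Real.log (ν y / ρ y)) then
    (((∑' y, ν y * Real.log (ν y / ρ y)) : ℝ) : EReal)
  else (⊤ : EReal)

variable {𝒳 : Type} [Fintype 𝒳] [DecidableEq 𝒳]

/-- `𝔥_C(ϖ‖ω) = H(ϖ‖Cω⊗ω) + ‖Cω⊗ω‖ − ‖ϖ‖`. -/
def hC (C : 𝒳 → 𝒳 → ℝ) (ϖ : 𝒳 → 𝒳 → ℝ) (ω : 𝒳 → ℝ) : EReal :=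
  relEntFin (fun q : 𝒳 × 𝒳 => ϖ q.1 q.2) (fun q : 𝒳 × 𝒳 => C q.1 q.2 * ω q.1 * ω q.2)
    + (((∑ a, ∑ b, C a b * ω a * ω b) : ℝ) : EReal) - (((∑ a, ∑ b, ϖ a b) : ℝ) : EReal)

/-- A probability mass function. -/
def IsPMF {Y : Type} (ν : Y → ℝ) : Prop := (∀ y, 0 ≤ ν y) ∧ HasSum ν 1

/-- The `𝒳`-marginal `ν₁` of a measure on `𝒳 × ℕ^𝒳`. -/
def marg (ν : 𝒳 × (𝒳 → ℕ) → ℝ) (a : 𝒳) : ℝ := ∑' ℓ : 𝒳 → ℕ, ν (a, ℓ)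

/-- The measure `⟨ν(·,ℓ), ℓ(·)⟩`, the second component of `Φ(ν)`. -/
def pairOf (ν : 𝒳 × (𝒳 → ℕ) → ℝ) (a b : 𝒳) : ℝ := ∑' ℓ : 𝒳 → ℕ, ν (a, ℓ) * (ℓ b : ℝ)

/-- Sub-consistency of a pair `(ϖ, ν)`. -/
def SubConsistent (ϖ : 𝒳 → 𝒳 → ℝ) (ν : 𝒳 × (𝒳 → ℕ) → ℝ) : Prop :=
  ∀ a b : 𝒳, (∑' ℓ : 𝒳 → ℕ, ENNReal.ofReal (ν (a, ℓ) * (ℓ b : ℝ))) ≤ ENNReal.ofReal (ϖ a b)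

/-- The measure with colour law `ω` under which the neighbourhood counts are independent
Poisson variables with means `ϖ(a,b)/ω(a)`; `Q[ϖ,ν]` is `Qof ϖ ν₁`. -/
def Qof (ϖ : 𝒳 → 𝒳 → ℝ) (ω : 𝒳 → ℝ) (x : 𝒳 × (𝒳 → ℕ)) : ℝ :=
  ω x.1 * ∏ b : 𝒳,
    Real.exp (-(ϖ x.1 b / ω x.1)) * (ϖ x.1 b / ω x.1) ^ (x.2 b) / (Nat.factorial (x.2 b) : ℝ)

/-- The set of possible (ordered) edges on `n` vertices. -/
abbrev Edge (n : ℕ) := {e : Fin n × Fin n // e.1 < e.2}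

/-- A coloured graph on `n` vertices: a colouring together with an edge set. -/
abbrev Config (𝒳 : Type) (n : ℕ) := (Fin n → 𝒳) × Finset (Edge n)

/-- The probability weight of a configuration under the coloured random graph law. -/
def wt {n : ℕ} (μ : 𝒳 → ℝ) (p : 𝒳 → 𝒳 → ℝ) (x : Config 𝒳 n) : ℝ :=
  (∏ v, μ (x.1 v)) *
    ∏ e : Edge n,
      if e ∈ x.2 then p (x.1 e.1.1) (x.1 e.1.2) else 1 - p (x.1 e.1.1) (x.1 e.1.2)

/-- The law of the coloured random graph, evaluated on an event. -/
def graphP (𝒳 : Type) [Fintype 𝒳] [DecidableEq 𝒳] (n : ℕ) (μ : 𝒳 → ℝ) (p : 𝒳 → 𝒳 → ℝ)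
    (A : Set (Config 𝒳 n)) : ℝ :=
  ∑ x : Config 𝒳 n, A.indicator (wt μ p) x

/-- Conditional probability for the coloured random graph. -/
def condP (𝒳 : Type) [Fintype 𝒳] [DecidableEq 𝒳] (n : ℕ) (μ : 𝒳 → ℝ) (p : 𝒳 → 𝒳 → ℝ)
    (A B : Set (Config 𝒳 n)) : ℝ :=
  graphP 𝒳 n μ p (A ∩ B) / graphP 𝒳 n μ p B

/-- Conditional expectation for the coloured random graph. -/
def condE (𝒳 : Type) [Fintype 𝒳] [DecidableEq 𝒳] (n : ℕ) (μ : 𝒳 → ℝ) (p : 𝒳 → 𝒳 → ℝ)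
    (f : Config 𝒳 n → ℝ) (B : Set (Config 𝒳 n)) : ℝ :=
  (∑ x : Config 𝒳 n, B.indicator (fun x => wt μ p x * f x) x) / graphP 𝒳 n μ p B

/-- The empirical colour measure `L¹`. -/
def empColor {n : ℕ} (x : Config 𝒳 n) (a : 𝒳) : ℝ :=
  ((Finset.univ.filter (fun v : Fin n => x.1 v = a)).card : ℝ) / n

/-- The empirical pair measure `L²`. -/
def empPair {n : ℕ} (x : Config 𝒳 n) (a b : 𝒳) : ℝ :=
  (∑ e ∈ x.2, ((if x.1 e.1.1 = a ∧ x.1 e.1.2 = b then (1:ℝ) else 0) +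
    (if x.1 e.1.2 = a ∧ x.1 e.1.1 = b then (1:ℝ) else 0))) / n

/-- The number of neighbours of `v` of colour `b`. -/
def locDeg {n : ℕ} (x : Config 𝒳 n) (v : Fin n) (b : 𝒳) : ℕ :=
  (x.2.filter (fun e => (e.1.1 = v ∧ x.1 e.1.2 = b) ∨ (e.1.2 = v ∧ x.1 e.1.1 = b))).card

/-- The empirical neighbourhood measure `M`. -/
def empNbhd {n : ℕ} (x : Config 𝒳 n) (y : 𝒳 × (𝒳 → ℕ)) : ℝ :=
  ((Finset.univ.filter (fun v : Fin n =>
      x.1 v = y.1 ∧ (fun b => locDeg x v b) = y.2)).card : ℝ) / n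

/-- Total variation distance between measures on `𝒳 × ℕ^𝒳`. -/
def dTV (ν ν' : 𝒳 × (𝒳 → ℕ) → ℝ) : ℝ := (1 / 2) * ∑' y, |ν y - ν' y|

end
end ColoredLDP


/-!
For `w, r ≥ 0` the concave map `t ↦ w t + r (1 - eᵗ)` has supremum `w log (w / r) + r - w`
(attained at `t = log (w / r)` when `w > 0`, approached as `t → -∞` when `w = 0`, and infinite
when `r = 0 < w`). Summing over `𝒳 × 𝒳` gives the formula; the maximizers depend on `(a, b)`
only through `(ϖ a b, C a b ω a ω b)`, so they are symmetric and the symmetry constraint on `g`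
costs nothing.
-/

namespace ColoredLDP

open Real Finset

lemma mul_add_mul_one_sub_exp_le {w r : ℝ} (t : ℝ) (hw : 0 ≤ w) (hr : 0 ≤ r)
    (hac : r = 0 → w = 0) : w * t + r * (1 - exp t) ≤ w * log (w / r) + r - w := by
  rcases hr.eq_or_lt with rfl | hr
  · simp [hac rfl]
  rcases hw.eq_or_lt with rfl | hw
  · nlinarith [exp_pos t]
  · have h := add_one_le_exp (t - log (w / r))
    rw [exp_sub, exp_log (div_pos hw hr), div_div_eq_mul_div, le_div_iff₀ hw] at h
    linear_combination h

noncomputable def legendreWitness (w r : ℝ) (n : ℕ) : ℝ :=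
  if w = 0 then -n else log (w / r)

lemma tendsto_legendreWitness {w r : ℝ} (hw : 0 ≤ w) (hr : 0 ≤ r) (hac : r = 0 → w = 0) :
    Tendsto (fun n => w * legendreWitness w r n + r * (1 - exp (legendreWitness w r n))) atTop
      (𝓝 (w * log (w / r) + r - w)) := by
  unfold legendreWitness
  rcases eq_or_ne w 0 with rfl | hw0
  · have hexp := tendsto_exp_neg_atTop_nhds_zero.comp tendsto_natCast_atTop_atTop
    simpa using (hexp.const_sub 1).const_mul r
  · have hr0 : r ≠ 0 := fun h => hw0 (hac h)
    have hwr : 0 < w / r := div_pos (hw.lt_of_ne' hw0) (hr.lt_of_ne' hr0)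
    simp only [if_neg hw0, exp_log hwr]
    convert tendsto_const_nhds using 2
    field_simp
    ring

section LegendreFun

variable {Y : Type} [Fintype Y]

noncomputable def legendreFun (ν ρ g : Y → ℝ) : ℝ :=
  ∑ y, (ν y * g y + ρ y * (1 - exp (g y)))

variable {ν ρ : Y → ℝ}

lemma legendreFun_le (hν : ∀ y, 0 ≤ ν y) (hρ : ∀ y, 0 ≤ ρ y) (hac : ∀ y, ρ y = 0 → ν y = 0)
    (g : Y → ℝ) : legendreFun ν ρ g ≤ ∑ y, (ν y * log (ν y / ρ y) + ρ y - ν y) :=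
  sum_le_sum fun y _ => mul_add_mul_one_sub_exp_le (g y) (hν y) (hρ y) (hac y)

lemma tendsto_legendreFun_legendreWitness (hν : ∀ y, 0 ≤ ν y) (hρ : ∀ y, 0 ≤ ρ y)
    (hac : ∀ y, ρ y = 0 → ν y = 0) :
    Tendsto (fun n => legendreFun ν ρ fun y => legendreWitness (ν y) (ρ y) n) atTop
      (𝓝 (∑ y, (ν y * log (ν y / ρ y) + ρ y - ν y))) :=
  tendsto_finsetSum _ fun y _ => tendsto_legendreWitness (hν y) (hρ y) (hac y)

lemma legendreFun_ite_eq_zero (t : ℝ) :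
    legendreFun ν ρ (fun y => if ρ y = 0 then t else 0) = t * ∑ y with ρ y = 0, ν y := by
  rw [legendreFun, sum_filter, mul_sum]
  refine sum_congr rfl fun y _ => ?_
  split_ifs with h <;> simp [h, mul_comm]

theorem iSup_legendreFun_eq (σ : Y → Y) (hν : ∀ y, 0 ≤ ν y) (hρ : ∀ y, 0 ≤ ρ y)
    (hνσ : ∀ y, ν (σ y) = ν y) (hρσ : ∀ y, ρ (σ y) = ρ y) :
    ⨆ g : {g : Y → ℝ // ∀ y, g (σ y) = g y}, (legendreFun ν ρ g : EReal) =
      relEntFin ν ρ + ((∑ y, ρ y : ℝ) : EReal) - ((∑ y, ν y : ℝ) : EReal) := by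
  by_cases hac : ∀ y, ρ y = 0 → ν y = 0
  · have hrhs : relEntFin ν ρ + ((∑ y, ρ y : ℝ) : EReal) - ((∑ y, ν y : ℝ) : EReal) =
        ((∑ y, (ν y * log (ν y / ρ y) + ρ y - ν y) : ℝ) : EReal) := by
      rw [relEntFin, if_pos hac, sum_sub_distrib, sum_add_distrib]
      norm_cast
    rw [hrhs]
    refine le_antisymm (iSup_le fun g => EReal.coe_le_coe (legendreFun_le hν hρ hac g)) ?_
    refine le_of_tendsto'
      (EReal.tendsto_coe.2 (tendsto_legendreFun_legendreWitness hν hρ hac)) fun n => ?_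
    exact le_iSup_of_le ⟨fun y => legendreWitness (ν y) (ρ y) n, fun y => by simp only [hνσ, hρσ]⟩
      le_rfl
  · obtain ⟨y₀, hρy₀, hνy₀⟩ : ∃ y, ρ y = 0 ∧ ν y ≠ 0 := by simpa using hac
    set m := ∑ y with ρ y = 0, ν y
    have hm : 0 < m :=
      sum_pos' (fun y _ => hν y) ⟨y₀, by simp [hρy₀], (hν y₀).lt_of_ne' hνy₀⟩
    rw [relEntFin, if_neg hac, EReal.top_add_coe, EReal.top_sub_coe, iSup_eq_top]
    intro b hb
    obtain ⟨x, hbx, -⟩ := EReal.exists_between_coe_real hb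
    refine ⟨⟨fun y => if ρ y = 0 then x / m else 0, fun y => by simp only [hρσ]⟩, ?_⟩
    rwa [legendreFun_ite_eq_zero, div_mul_cancel₀ _ hm.ne']

end LegendreFun

theorem legendre_hC_general (𝒳 : Type) [Fintype 𝒳]
    (C : 𝒳 → 𝒳 → ℝ) (hC0 : ∀ a b, 0 ≤ C a b) (hCsym : ∀ a b, C a b = C b a)
    (ϖ : 𝒳 → 𝒳 → ℝ) (hϖ0 : ∀ a b, 0 ≤ ϖ a b) (hϖsym : ∀ a b, ϖ a b = ϖ b a)
    (ω : 𝒳 → ℝ) (hω0 : ∀ a, 0 ≤ ω a) :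
    (((1 : ℝ) / 2 : ℝ) : EReal) *
        (⨆ g : {g : 𝒳 → 𝒳 → ℝ // ∀ a b, g a b = g b a},
          (((∑ a, ∑ b, ϖ a b * g.1 a b +
              ∑ a, ∑ b, C a b * ω a * ω b * (1 - Real.exp (g.1 a b))) : ℝ) : EReal)) =
      (((1 : ℝ) / 2 : ℝ) : EReal) * hC C ϖ ω := by
  let uncurrySymm : {g : 𝒳 → 𝒳 → ℝ // ∀ a b, g a b = g b a} ≃
      {g : 𝒳 × 𝒳 → ℝ // ∀ q, g q.swap = g q} :=
    (Equiv.curry 𝒳 𝒳 ℝ).symm.subtypeEquiv fun g =>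
      ⟨fun h q => (h q.1 q.2).symm, fun h a b => (h (a, b)).symm⟩
  have hLegendre := iSup_legendreFun_eq Prod.swap (ν := fun q : 𝒳 × 𝒳 => ϖ q.1 q.2)
    (ρ := fun q => C q.1 q.2 * ω q.1 * ω q.2) (fun q => hϖ0 _ _)
    (fun q => mul_nonneg (mul_nonneg (hC0 _ _) (hω0 _)) (hω0 _)) (fun q => hϖsym _ _)
    (fun q => by simp only [Prod.fst_swap, Prod.snd_swap, hCsym q.2]; ring)
  simp only [Fintype.sum_prod_type] at hLegendre
  rw [hC, ← hLegendre, uncurrySymm.iSup_congr fun g => ?_]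
  simp only [legendreFun, Fintype.sum_prod_type, sum_add_distrib]
  rfl

/-- Lemma 3.2(i): the Legendre-type variational formula for `(1/2)𝔥_C(ϖ‖ω)`. -/
theorem legendre_hC (𝒳 : Type) [Fintype 𝒳] [DecidableEq 𝒳]
    (C : 𝒳 → 𝒳 → ℝ) (hC0 : ∀ a b, 0 ≤ C a b) (hCsym : ∀ a b, C a b = C b a)
    (ϖ : 𝒳 → 𝒳 → ℝ) (hϖ0 : ∀ a b, 0 ≤ ϖ a b) (hϖsym : ∀ a b, ϖ a b = ϖ b a)
    (ω : 𝒳 → ℝ) (hω0 : ∀ a, 0 ≤ ω a) (hω1 : ∑ a, ω a = 1) :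
    (((1 : ℝ) / 2 : ℝ) : EReal) *
        (⨆ g : {g : 𝒳 → 𝒳 → ℝ // ∀ a b, g a b = g b a},
          (((∑ a, ∑ b, ϖ a b * g.1 a b +
              ∑ a, ∑ b, C a b * ω a * ω b * (1 - Real.exp (g.1 a b))) : ℝ) : EReal)) =
      (((1 : ℝ) / 2 : ℝ) : EReal) * hC C ϖ ω :=
  legendre_hC_general 𝒳 C hC0 hCsym ϖ hϖ0 hϖsym ω hω0

end ColoredLDP
end

section
/- Let 𝒳 be a finite set, C : 𝒳×𝒳 → [0,∞) symmetric and not identically zero, and ω a probability measure on 𝒳. Then the function I_ω(ϖ) = (1/2)·𝔥_C(ϖ‖ω), defined on the space of finite symmetric measures ϖ on 𝒳×𝒳 (identified with the nonnegative symmetric vectors in ℝ^{𝒳×𝒳} with the Euclidean topology) and taking values in [0,∞], is lower semicontinuous and has compact sublevel sets: for every α < ∞ the set {ϖ : I_ω(ϖ) ≤ α} is compact. -/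
open Filter Topology

/-! With `r = Cω⊗ω`, `𝔥_C(ϖ‖ω) = ∑_q (ϖ_q log (ϖ_q / r_q) + r_q - ϖ_q)` is a finite sum of
`[0, ∞]`-valued lower semicontinuous functions of single coordinates (each summand being `⊤`
where absolute continuity fails). Since `t ≤ klFun t + e²`, a summand bounded by `M` forces
`ϖ_q ≤ r_q e² + M`, so every sublevel set is a closed subset of a box. -/

namespace ColoredLDP

open scoped ENNReal
open InformationTheory Real Finset Function

/-- The summand `x log (x / r) + r - x` of `𝔥_C`, and `⊤` where `r = 0 ≠ x`. Writing it as
`r · klFun (x / r)` makes it continuous in `x` for `r ≠ 0`. -/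
noncomputable def relEntTerm (x r : ℝ) : ℝ≥0∞ :=
  if r = 0 ∧ x ≠ 0 then ⊤ else ENNReal.ofReal (r * klFun (x / r))

lemma mul_klFun_div_eq {x r : ℝ} (hac : r = 0 → x = 0) :
    r * klFun (x / r) = x * log (x / r) + r - x := by
  by_cases hr : r = 0
  · simp [hr, hac hr]
  · rw [klFun_apply]
    field_simp

lemma relEntTerm_of_ac {x r : ℝ} (hac : r = 0 → x = 0) :
    relEntTerm x r = ENNReal.ofReal (r * klFun (x / r)) :=
  if_neg fun h => h.2 (hac h.1)

lemma lowerSemicontinuous_relEntTerm (r : ℝ) : LowerSemicontinuous (relEntTerm · r) := by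
  by_cases hr : r = 0
  · have : (relEntTerm · r) = Set.indicator {0}ᶜ fun _ => ⊤ := by
      ext x
      by_cases hx : x = 0 <;> simp [relEntTerm, hr, hx]
    rw [this]
    exact isOpen_compl_singleton.lowerSemicontinuous_indicator zero_le
  · simp only [relEntTerm, hr, false_and, if_false]
    exact (ENNReal.continuous_ofReal.comp (by fun_prop)).lowerSemicontinuous

lemma le_klFun_add_exp_two {t : ℝ} (ht : 0 ≤ t) : t ≤ klFun t + exp 2 := by
  rcases le_or_gt t (exp 2) with h | h
  · linarith [klFun_nonneg ht]
  · have hlog : 2 ≤ log t := (le_log_iff_exp_le ((exp_pos 2).trans h)).2 h.le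
    rw [klFun_apply]
    linarith [mul_le_mul_of_nonneg_left hlog ht, exp_pos 2]

lemma le_mul_exp_two_add_of_relEntTerm_le {x r : ℝ} {m : ℝ≥0∞} (hx : 0 ≤ x) (hr : 0 ≤ r)
    (hm : m ≠ ⊤) (h : relEntTerm x r ≤ m) : x ≤ r * exp 2 + m.toReal := by
  rcases hr.eq_or_lt with rfl | hr
  · have hx0 : x = 0 := by
      by_contra hx0
      simp [relEntTerm, hx0, hm] at h
    simp [hx0]
  · have hm' : r * klFun (x / r) ≤ m.toReal := by
      rw [relEntTerm_of_ac fun h => absurd h hr.ne'] at h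
      exact (ENNReal.ofReal_le_iff_le_toReal hm).1 h
    calc x = r * (x / r) := by field_simp
      _ ≤ r * (klFun (x / r) + exp 2) :=
        mul_le_mul_of_nonneg_left (le_klFun_add_exp_two (by positivity)) hr.le
      _ ≤ r * exp 2 + m.toReal := by linarith

section Finite

variable {Y : Type} [Fintype Y]

lemma relEntFin_add_sub_eq_sum_relEntTerm {ν ρ : Y → ℝ} (hν : ∀ y, 0 ≤ ν y)
    (hρ : ∀ y, 0 ≤ ρ y) :
    relEntFin ν ρ + ((∑ y, ρ y : ℝ) : EReal) - ((∑ y, ν y : ℝ) : EReal) =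
      ((∑ y, relEntTerm (ν y) (ρ y) : ℝ≥0∞) : EReal) := by
  unfold relEntFin
  split_ifs with hac
  · have hterm : ∀ y, 0 ≤ ρ y * klFun (ν y / ρ y) := fun y =>
      mul_nonneg (hρ y) (klFun_nonneg (div_nonneg (hν y) (hρ y)))
    rw [sum_congr rfl fun y _ => relEntTerm_of_ac (hac y),
      ← ENNReal.ofReal_sum_of_nonneg fun y _ => hterm y, EReal.coe_ennreal_ofReal,
      max_eq_left (sum_nonneg fun y _ => hterm y),
      sum_congr rfl fun y _ => mul_klFun_div_eq (hac y), sum_sub_distrib, sum_add_distrib,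
      EReal.coe_sub, EReal.coe_add]
  · obtain ⟨y, hρy, hνy⟩ := by simpa only [not_forall] using hac
    rw [EReal.top_add_coe, EReal.top_sub_coe, eq_comm, EReal.coe_ennreal_eq_top_iff,
      ENNReal.sum_eq_top]
    exact ⟨y, mem_univ y, by simp [relEntTerm, hρy, hνy]⟩

lemma lowerSemicontinuous_sum_relEntTerm (ρ : Y → ℝ) :
    LowerSemicontinuous fun ν : Y → ℝ => ∑ y, relEntTerm (ν y) (ρ y) :=
  lowerSemicontinuous_sum fun y _ =>
    (lowerSemicontinuous_relEntTerm (ρ y)).comp (continuous_apply y)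

lemma isCompact_setOf_sum_relEntTerm_le {ρ : Y → ℝ} (hρ : ∀ y, 0 ≤ ρ y) {m : ℝ≥0∞}
    (hm : m ≠ ⊤) :
    IsCompact {ν : Y → ℝ | (∀ y, 0 ≤ ν y) ∧ ∑ y, relEntTerm (ν y) (ρ y) ≤ m} := by
  have hclosed : IsClosed {ν : Y → ℝ | (∀ y, 0 ≤ ν y) ∧ ∑ y, relEntTerm (ν y) (ρ y) ≤ m} := by
    rw [Set.ofPred_and, Set.ofPred_forall]
    exact (isClosed_iInter fun y => isClosed_le continuous_const (continuous_apply y)).inter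
      ((lowerSemicontinuous_sum_relEntTerm ρ).isClosed_preimage m)
  refine (isCompact_univ_pi fun y => isCompact_Icc (a := 0) (b := ρ y * exp 2 + m.toReal)
    ).of_isClosed_subset hclosed ?_
  rintro ν ⟨hν, hsum⟩ y -
  exact ⟨hν y, le_mul_exp_two_add_of_relEntTerm_le (hν y) (hρ y) hm
    ((single_le_sum (fun _ _ => zero_le) (mem_univ y)).trans hsum)⟩

end Finite

lemma hC_eq_sum_relEntTerm {𝒳 : Type} [Fintype 𝒳] {C ϖ : 𝒳 → 𝒳 → ℝ} {ω : 𝒳 → ℝ}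
    (hC0 : ∀ a b, 0 ≤ C a b) (hω0 : ∀ a, 0 ≤ ω a) (hϖ : ∀ a b, 0 ≤ ϖ a b) :
    hC C ϖ ω = ((∑ q : 𝒳 × 𝒳, relEntTerm (ϖ q.1 q.2) (C q.1 q.2 * ω q.1 * ω q.2) : ℝ≥0∞) :
      EReal) := by
  rw [hC, ← Fintype.sum_prod_type', ← Fintype.sum_prod_type']
  exact relEntFin_add_sub_eq_sum_relEntTerm (fun q => hϖ _ _)
    fun q => mul_nonneg (mul_nonneg (hC0 _ _) (hω0 _)) (hω0 _)

lemma isClosed_setOf_nonneg_symm {α : Type} :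
    IsClosed {ϖ : α → α → ℝ | (∀ a b, 0 ≤ ϖ a b) ∧ ∀ a b, ϖ a b = ϖ b a} := by
  simp only [Set.ofPred_and, Set.ofPred_forall]
  exact (isClosed_iInter fun a => isClosed_iInter fun b =>
      isClosed_le continuous_const (by fun_prop)).inter
    (isClosed_iInter fun a => isClosed_iInter fun b => isClosed_eq (by fun_prop) (by fun_prop))

lemma half_mul_coe_ennreal (x : ℝ≥0∞) :
    (((1 : ℝ) / 2 : ℝ) : EReal) * x = ((2⁻¹ * x : ℝ≥0∞) : EReal) := by
  rw [EReal.coe_ennreal_mul, ← ENNReal.ofReal_ofNat, ← ENNReal.ofReal_inv_of_pos two_pos,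
    EReal.coe_ennreal_ofReal, max_eq_left (by norm_num), one_div]

theorem hC_good_rate_general (𝒳 : Type) [Fintype 𝒳]
    (C : 𝒳 → 𝒳 → ℝ) (hC0 : ∀ a b, 0 ≤ C a b)
    (ω : 𝒳 → ℝ) (hω0 : ∀ a, 0 ≤ ω a) :
    LowerSemicontinuous
      (fun ϖ : {ϖ : 𝒳 → 𝒳 → ℝ // (∀ a b, 0 ≤ ϖ a b) ∧ ∀ a b, ϖ a b = ϖ b a} =>
        (((1 : ℝ) / 2 : ℝ) : EReal) * hC C ϖ.1 ω) ∧
    ∀ α : ℝ,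
      IsCompact {ϖ : {ϖ : 𝒳 → 𝒳 → ℝ // (∀ a b, 0 ≤ ϖ a b) ∧ ∀ a b, ϖ a b = ϖ b a} |
        (((1 : ℝ) / 2 : ℝ) : EReal) * hC C ϖ.1 ω ≤ (α : EReal)} := by
  set ρ : 𝒳 × 𝒳 → ℝ := fun q => C q.1 q.2 * ω q.1 * ω q.2
  have hρ : ∀ q, 0 ≤ ρ q := fun q => mul_nonneg (mul_nonneg (hC0 _ _) (hω0 _)) (hω0 _)
  set G : (𝒳 × 𝒳 → ℝ) → ℝ≥0∞ := fun ν => ∑ q, relEntTerm (ν q) (ρ q)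
  have hI (ϖ : {ϖ : 𝒳 → 𝒳 → ℝ // (∀ a b, 0 ≤ ϖ a b) ∧ ∀ a b, ϖ a b = ϖ b a}) :
      (((1 : ℝ) / 2 : ℝ) : EReal) * hC C ϖ.1 ω = ((2⁻¹ * G (uncurry ϖ.1) : ℝ≥0∞) : EReal) := by
    rw [hC_eq_sum_relEntTerm hC0 hω0 ϖ.2.1, half_mul_coe_ennreal]
    rfl
  simp only [hI]
  have hlsc : LowerSemicontinuous fun ν => ((2⁻¹ * G ν : ℝ≥0∞) : EReal) :=
    (continuous_coe_ennreal_ereal.comp (ENNReal.continuous_const_mul (by simp))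
      ).comp_lowerSemicontinuous (lowerSemicontinuous_sum_relEntTerm ρ)
      fun _ _ h => EReal.coe_ennreal_le_coe_ennreal_iff.2 (mul_le_mul_right h _)
  have hlsc' := hlsc.comp (Homeomorph.piCurry.symm.continuous.comp (continuous_subtype_val
    (p := fun ϖ : 𝒳 → 𝒳 → ℝ => (∀ a b, 0 ≤ ϖ a b) ∧ ∀ a b, ϖ a b = ϖ b a)))
  refine ⟨hlsc', fun α => ?_⟩
  have hm : 2 * (α : EReal).toENNReal ≠ ⊤ :=
    ENNReal.mul_ne_top ENNReal.ofNat_ne_top (EReal.toENNReal_ne_top_iff.2 (EReal.coe_ne_top α))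
  have hK := (isCompact_setOf_sum_relEntTerm_le hρ hm).image Homeomorph.piCurry.continuous
  refine (isClosed_setOf_nonneg_symm.isClosedEmbedding_subtypeVal.isCompact_preimage hK
    ).of_isClosed_subset (hlsc'.isClosed_preimage α) fun ϖ hϖ => ?_
  have hG : 2⁻¹ * G (uncurry ϖ.1) ≤ (α : EReal).toENNReal := by
    simpa only [EReal.toENNReal_coe] using EReal.toENNReal_le_toENNReal hϖ
  exact ⟨uncurry ϖ.1,
    ⟨fun q => ϖ.2.1 _ _, (ENNReal.inv_mul_le_iff two_ne_zero ENNReal.ofNat_ne_top).1 hG⟩, rfl⟩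

/-- Lemma 3.2(ii): `I_ω = (1/2)𝔥_C(·‖ω)` is a good rate function on the space of
finite symmetric measures on `𝒳 × 𝒳`. -/
theorem hC_good_rate (𝒳 : Type) [Fintype 𝒳] [DecidableEq 𝒳]
    (C : 𝒳 → 𝒳 → ℝ) (hC0 : ∀ a b, 0 ≤ C a b) (hCsym : ∀ a b, C a b = C b a)
    (hCne : ∃ a b, C a b ≠ 0)
    (ω : 𝒳 → ℝ) (hω0 : ∀ a, 0 ≤ ω a) (hω1 : ∑ a, ω a = 1) :
    LowerSemicontinuous
      (fun ϖ : {ϖ : 𝒳 → 𝒳 → ℝ // (∀ a b, 0 ≤ ϖ a b) ∧ ∀ a b, ϖ a b = ϖ b a} =>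
        (((1 : ℝ) / 2 : ℝ) : EReal) * hC C ϖ.1 ω) ∧
    ∀ α : ℝ,
      IsCompact {ϖ : {ϖ : 𝒳 → 𝒳 → ℝ // (∀ a b, 0 ≤ ϖ a b) ∧ ∀ a b, ϖ a b = ϖ b a} |
        (((1 : ℝ) / 2 : ℝ) : EReal) * hC C ϖ.1 ω ≤ (α : EReal)} :=
  hC_good_rate_general 𝒳 C hC0 ω hω0

end ColoredLDP
end

section
/- Let 𝒳 be a finite set with m elements. There exists ϑ > 0, depending only on m, such that for all n ∈ ℕ, all ω_n ∈ M_n(𝒳) and all ϖ_n ∈ M̃_{*,n}(𝒳×𝒳), the number of elements of K^{(n)}(ω_n,ϖ_n) satisfies #K^{(n)}(ω_n,ϖ_n) ≤ exp[ ϑ·(log n)·(n‖ϖ_n‖)^{(2m−1)/(2m)} ], where ‖ϖ_n‖ = Σ_{a,b} ϖ_n(a,b). -/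
open Filter Topology

namespace ColoredLDP

/-!
The measure `M` of a graph is determined by its finitely many nonzero values, each of the form
`(a, ℓ) ↦ k / n` with `k ≤ n`. Let `S = n‖ϖ‖ = 2|E|` be the total degree. Every degree vector has
entries at most `S`, and a graph has at most `t ^ m + S / t` distinct degree vectors: those of total
`< t` lie in `{0, …, t - 1} ^ 𝒳`, and at most `S / t` vertices have total degree `≥ t`. Taking
`t = ⌈S ^ (1 / 2m)⌉` makes the support of `M` of size `C = O(S ^ ((2m - 1) / 2m))`, so `M` is
encoded by its graph, a set of at most `C` points of a universe of size `N ≤ n ^ 7m`; there are at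
most `(N + 1) ^ C` such sets. Without edges the bound is `1`, and indeed `M` is then determined
by `L¹`.
-/

open Finset

theorem card_filter_powerset_card_le {α : Type*} (U : Finset α) (C : ℕ) :
    #(U.powerset.filter (#· ≤ C)) ≤ (#U + 1) ^ C := by
  classical
  have hsub : U.powerset.filter (#· ≤ C) ⊆ (range (C + 1)).biUnion (U.powersetCard ·) := by
    intro T hT
    rw [mem_filter, mem_powerset] at hT
    exact mem_biUnion.2 ⟨#T, mem_range.2 (Nat.lt_succ_of_le hT.2), mem_powersetCard.2 ⟨hT.1, rfl⟩⟩
  calc #(U.powerset.filter (#· ≤ C))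
      ≤ ∑ i ∈ range (C + 1), #(U.powersetCard i) := (card_le_card hsub).trans card_biUnion_le
    _ ≤ ∑ i ∈ range (C + 1), #U ^ i * 1 ^ (C - i) * C.choose i := by
      refine sum_le_sum fun i hi => ?_
      rw [card_powersetCard, one_pow, mul_one]
      exact (Nat.choose_le_pow _ _).trans
        (Nat.le_mul_of_pos_right _ (Nat.choose_pos (Nat.lt_succ_iff.1 (mem_range.1 hi))))
    _ = (#U + 1) ^ C := (add_pow _ _ _).symm

theorem ncard_le_of_support_subset {α M : Type*} [DecidableEq α] [DecidableEq M] [Zero M]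
    {s : Set (α → M)} (K : Finset α) (V : Finset M) (C : ℕ)
    (h : ∀ f ∈ s, (∀ a, f a ∈ V) ∧ ∃ T ⊆ K, #T ≤ C ∧ Function.support f ⊆ T) :
    s.ncard ≤ (#K * #V + 1) ^ C := by
  let graph (f : α → M) : Finset (α × M) := (K ×ˢ V).filter fun p => f p.1 = p.2 ∧ p.2 ≠ 0
  have mem_graph : ∀ f ∈ s, ∀ a, f a ≠ 0 → (a, f a) ∈ graph f := by
    intro f hf a ha
    obtain ⟨hV, T, hTK, -, hT⟩ := h f hf
    exact mem_filter.2 ⟨mem_product.2 ⟨hTK (hT ha), hV a⟩, rfl, ha⟩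
  have maps : ∀ f ∈ s, graph f ∈ (K ×ˢ V).powerset.filter (#· ≤ C) := by
    intro f hf
    obtain ⟨-, T, -, hTC, hT⟩ := h f hf
    refine mem_filter.2 ⟨mem_powerset.2 (filter_subset _ _), le_trans ?_ hTC⟩
    refine card_le_card_of_injOn Prod.fst (fun p hp => ?_) fun p hp q hq hpq => ?_
    · obtain ⟨-, hfp, hp0⟩ := mem_filter.1 hp
      exact hT (show f p.1 ≠ 0 from hfp ▸ hp0)
    · have hp' := (mem_filter.1 hp).2.1
      have hq' := (mem_filter.1 hq).2.1
      exact Prod.ext hpq (hp' ▸ hq' ▸ congrArg f hpq)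
  have inj : Set.InjOn graph s := by
    intro f hf g hg hfg
    funext a
    rcases eq_or_ne (f a) 0 with hfa | hfa
    · rcases eq_or_ne (g a) 0 with hga | hga
      · rw [hfa, hga]
      · exact (mem_filter.1 (hfg ▸ mem_graph g hg a hga)).2.1
    · exact ((mem_filter.1 (hfg ▸ mem_graph f hf a hfa)).2.1).symm
  calc s.ncard ≤ (((K ×ˢ V).powerset.filter (#· ≤ C) : Finset _) : Set _).ncard :=
        Set.ncard_le_ncard_of_injOn graph maps inj
    _ ≤ (#K * #V + 1) ^ C := by
        rw [Set.ncard_coe_finset, ← card_product]; exact card_filter_powerset_card_le _ _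

theorem card_image_le_pow_add_div {ι κ : Type*} [Fintype κ] [DecidableEq κ] (s : Finset ι)
    (d : ι → κ → ℕ) {t : ℕ} (ht : 0 < t) :
    #(s.image d) ≤ t ^ Fintype.card κ + (∑ i ∈ s, ∑ k, d i k) / t := by
  have small : (s.image d).filter (fun ℓ => ∑ k, ℓ k < t) ⊆ Fintype.piFinset fun _ => range t :=
    fun ℓ hℓ => Fintype.mem_piFinset.2 fun k => mem_range.2 <|
      (single_le_sum (fun _ _ => Nat.zero_le _) (mem_univ k)).trans_lt (mem_filter.1 hℓ).2
  have large : #((s.image d).filter (fun ℓ => ¬ ∑ k, ℓ k < t)) * t ≤ ∑ i ∈ s, ∑ k, d i k := by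
    rw [filter_image]
    calc #((s.filter fun i => ¬ ∑ k, d i k < t).image d) * t
        ≤ #(s.filter fun i => ¬ ∑ k, d i k < t) • t := Nat.mul_le_mul_right _ card_image_le
      _ ≤ ∑ i ∈ s.filter (fun i => ¬ ∑ k, d i k < t), ∑ k, d i k :=
        card_nsmul_le_sum _ _ _ fun i hi => not_lt.1 (mem_filter.1 hi).2
      _ ≤ ∑ i ∈ s, ∑ k, d i k := sum_le_sum_of_subset (filter_subset _ _)
  calc #(s.image d)
      = #((s.image d).filter fun ℓ => ∑ k, ℓ k < t) +
          #((s.image d).filter fun ℓ => ¬ ∑ k, ℓ k < t) := (card_filter_add_card_filter_not _).symm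
    _ ≤ t ^ Fintype.card κ + (∑ i ∈ s, ∑ k, d i k) / t := by
      refine add_le_add ?_ ((Nat.le_div_iff_mul_le ht).2 large)
      simpa using card_le_card small

section Graph

variable {𝒳 : Type} {n : ℕ}

theorem card_edges_le (x : Config 𝒳 n) : #x.2 ≤ n ^ 2 :=
  calc #x.2 ≤ Fintype.card (Edge n) := card_le_univ _
    _ ≤ Fintype.card (Fin n × Fin n) := Fintype.card_subtype_le _
    _ = n ^ 2 := by simp [sq]

variable [Fintype 𝒳] [DecidableEq 𝒳]

theorem sum_locDeg (x : Config 𝒳 n) : ∑ v, ∑ b, locDeg x v b = 2 * #x.2 := by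
  let R (p : Fin n × 𝒳) (e : Edge n) : Prop :=
    (e.1.1 = p.1 ∧ x.1 e.1.2 = p.2) ∨ (e.1.2 = p.1 ∧ x.1 e.1.1 = p.2)
  have endpoints (e : Edge n) :
      (univ : Finset (Fin n × 𝒳)).bipartiteBelow R e =
        {(e.1.1, x.1 e.1.2), (e.1.2, x.1 e.1.1)} := by
    ext ⟨v, b⟩
    simp only [R, mem_bipartiteBelow, mem_univ, true_and, mem_insert, mem_singleton, Prod.mk.injEq]
    grind
  calc ∑ v, ∑ b, locDeg x v b = ∑ p : Fin n × 𝒳, #(x.2.bipartiteAbove R p) :=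
        (Fintype.sum_prod_type' _).symm
    _ = ∑ e ∈ x.2, #(univ.bipartiteBelow R e) :=
        sum_card_bipartiteAbove_eq_sum_card_bipartiteBelow _
    _ = 2 * #x.2 := by
        rw [sum_congr rfl fun e _ => (congrArg card (endpoints e)).trans
          (card_pair fun h => e.2.ne (congrArg Prod.fst h)), sum_const, smul_eq_mul, mul_comm]

theorem natCast_mul_sum_empPair (x : Config 𝒳 n) :
    (n : ℝ) * ∑ a, ∑ b, empPair x a b = 2 * #x.2 := by
  rcases eq_or_ne n 0 with rfl | hn
  · simp [eq_empty_of_isEmpty x.2]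
  have pair (e : Edge n) : ∑ a, ∑ b, ((if x.1 e.1.1 = a ∧ x.1 e.1.2 = b then (1 : ℝ) else 0) +
      (if x.1 e.1.2 = a ∧ x.1 e.1.1 = b then (1 : ℝ) else 0)) = 2 := by
    simp only [sum_add_distrib, ite_and]
    norm_num
  simp only [empPair, ← sum_div]
  rw [mul_div_cancel₀ _ (Nat.cast_ne_zero.2 hn), ← Fintype.sum_prod_type', sum_comm,
    sum_congr rfl fun e _ => (Fintype.sum_prod_type' _).trans (pair e), sum_const,
    nsmul_eq_mul, mul_comm]

theorem empNbhd_of_edges_eq_empty {x : Config 𝒳 n} (hx : x.2 = ∅) :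
    empNbhd x = fun y => if y.2 = 0 then empColor x y.1 else 0 := by
  funext y
  have hdeg : ∀ v b, locDeg x v b = 0 := by simp [locDeg, hx]
  split_ifs with hy
  · simp [empNbhd, empColor, hdeg, hy, eq_comm, Pi.zero_def]
  · rw [Pi.zero_def] at hy
    simp [empNbhd, hdeg, Ne.symm hy]

theorem locDeg_le (x : Config 𝒳 n) (v : Fin n) (b : 𝒳) : locDeg x v b ≤ 2 * #x.2 :=
  calc locDeg x v b ≤ ∑ b', locDeg x v b' := single_le_sum (fun _ _ => Nat.zero_le _) (mem_univ b)
    _ ≤ ∑ v', ∑ b', locDeg x v' b' :=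
      single_le_sum (f := fun v' => ∑ b', locDeg x v' b') (fun _ _ => Nat.zero_le _) (mem_univ v)
    _ = 2 * #x.2 := sum_locDeg x

theorem empNbhd_mem_image (x : Config 𝒳 n) (y : 𝒳 × (𝒳 → ℕ)) :
    empNbhd x y ∈ (range (n + 1)).image fun k : ℕ => (k : ℝ) / n :=
  mem_image.2 ⟨_, mem_range.2 (Nat.lt_succ_of_le ((card_filter_le _ _).trans (card_fin n).le)),
    rfl⟩

theorem support_empNbhd_subset (x : Config 𝒳 n) :
    Function.support (empNbhd x) ⊆
      ((univ ×ˢ univ.image (locDeg x) : Finset (𝒳 × (𝒳 → ℕ))) : Set _) := by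
  intro y hy
  have hne :
      (univ.filter fun v : Fin n => x.1 v = y.1 ∧ (fun b => locDeg x v b) = y.2).Nonempty := by
    rw [← card_pos, Nat.pos_iff_ne_zero]
    exact fun h => hy (by simp only [empNbhd, h, Nat.cast_zero, zero_div])
  obtain ⟨v, hv⟩ := hne
  obtain ⟨-, -, hdeg⟩ := mem_filter.1 hv
  simp only [coe_product, coe_univ, coe_image, Set.mem_prod, Set.mem_univ, Set.mem_image, true_and]
  exact ⟨v, hdeg⟩

theorem ncard_image_empNbhd_le (s : Set (Config 𝒳 n)) {S t : ℕ} (ht : 0 < t)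
    (hs : ∀ x ∈ s, 2 * #x.2 = S) :
    (empNbhd '' s).ncard ≤ (Fintype.card 𝒳 * (S + 1) ^ Fintype.card 𝒳 * (n + 1) + 1) ^
      (Fintype.card 𝒳 * (t ^ Fintype.card 𝒳 + S / t)) := by
  let K : Finset (𝒳 × (𝒳 → ℕ)) := univ ×ˢ Fintype.piFinset fun _ => range (S + 1)
  let V : Finset ℝ := (range (n + 1)).image fun k : ℕ => (k : ℝ) / n
  have hKV : #K * #V ≤ Fintype.card 𝒳 * (S + 1) ^ Fintype.card 𝒳 * (n + 1) := by
    exact Nat.mul_le_mul (by simp [K]) (card_image_le.trans (card_range _).le)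
  refine (ncard_le_of_support_subset K V _ ?_).trans (Nat.pow_le_pow_left (by omega) _)
  rintro _ ⟨x, hx, rfl⟩
  refine ⟨empNbhd_mem_image x, univ ×ˢ univ.image (locDeg x), ?_, ?_, support_empNbhd_subset x⟩
  · refine product_subset_product subset_rfl (image_subset_iff.2 fun v _ => ?_)
    exact Fintype.mem_piFinset.2 fun b =>
      mem_range.2 (Nat.lt_succ_of_le ((locDeg_le x v b).trans (hs x hx).le))
  · rw [card_product, card_univ]
    refine Nat.mul_le_mul_left _ ((card_image_le_pow_add_div _ _ ht).trans_eq ?_)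
    rw [sum_locDeg, hs x hx]

end Graph

theorem exists_nat_pow_add_div_le {m S : ℕ} (hm : 1 ≤ m) (hS : 1 ≤ S) :
    ∃ t : ℕ, 0 < t ∧
      ((t ^ m + S / t : ℕ) : ℝ) ≤ (2 ^ m + 1) * (S : ℝ) ^ ((2 * (m : ℝ) - 1) / (2 * m)) := by
  have hm' : (1 : ℝ) ≤ m := by exact_mod_cast hm
  have hS' : (1 : ℝ) ≤ S := by exact_mod_cast hS
  set α : ℝ := (2 * (m : ℝ) - 1) / (2 * m)
  set r : ℝ := (S : ℝ) ^ (1 / (2 * (m : ℝ)))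
  have hr : 1 ≤ r := Real.one_le_rpow hS' (by positivity)
  have hrt : r ≤ ⌈r⌉₊ := Nat.le_ceil r
  have htr : (⌈r⌉₊ : ℝ) ≤ 2 * r := by linarith [Nat.ceil_lt_add_one (zero_le_one.trans hr)]
  have hrm : r ^ m ≤ (S : ℝ) ^ α := by
    rw [← Real.rpow_natCast, ← Real.rpow_mul (by positivity)]
    refine Real.rpow_le_rpow_of_exponent_le hS' ?_
    rw [one_div_mul_eq_div]
    exact div_le_div_of_nonneg_right (by linarith) (by positivity)
  have hα : α + 1 / (2 * (m : ℝ)) = 1 := by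
    simp only [α]
    field_simp
    ring
  have hSr : (S : ℝ) / r = (S : ℝ) ^ α := by
    rw [div_eq_iff (by positivity), ← Real.rpow_add (by positivity), hα, Real.rpow_one]
  refine ⟨⌈r⌉₊, Nat.ceil_pos.2 (zero_lt_one.trans_le hr), ?_⟩
  calc ((⌈r⌉₊ ^ m + S / ⌈r⌉₊ : ℕ) : ℝ) ≤ (⌈r⌉₊ : ℝ) ^ m + (S : ℝ) / ⌈r⌉₊ := by
        push_cast
        gcongr
        exact Nat.cast_div_le
    _ ≤ (2 * r) ^ m + (S : ℝ) / r := by gcongr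
    _ ≤ (2 ^ m + 1) * (S : ℝ) ^ α := by
        rw [mul_pow, hSr]; nlinarith [pow_pos (two_pos (α := ℝ)) m]

theorem add_one_le_pow_of_le {m n S : ℕ} (hm : 1 ≤ m) (hn : 2 ≤ n) (hS : S ≤ 2 * n ^ 2) :
    m * (S + 1) ^ m * (n + 1) + 1 ≤ n ^ (7 * m) := by
  have hn4 : 4 ≤ n ^ 2 := by nlinarith
  have hS1 : S + 1 ≤ n ^ 4 := by nlinarith [show n ^ 4 = n ^ 2 * n ^ 2 by ring]
  have hmn : m ≤ n ^ m := (Nat.lt_two_pow_self).le.trans (Nat.pow_le_pow_left hn m)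
  have hn2 : n + 2 ≤ n ^ 2 := by nlinarith
  have hpos : 1 ≤ m * (S + 1) ^ m := Nat.one_le_iff_ne_zero.2 (by positivity)
  calc m * (S + 1) ^ m * (n + 1) + 1 ≤ m * (S + 1) ^ m * (n + 2) := by nlinarith
    _ ≤ n ^ m * (n ^ 4) ^ m * n ^ 2 := by gcongr
    _ = n ^ (5 * m + 2) := by ring
    _ ≤ n ^ (7 * m) := Nat.pow_le_pow_right (by omega) (by omega)

theorem natCast_pow_le_exp {m n S c N : ℕ} (hn : 1 ≤ n) (hN : N ≤ n ^ (7 * m))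
    (hc : (c : ℝ) ≤ (2 ^ m + 1) * (S : ℝ) ^ ((2 * (m : ℝ) - 1) / (2 * m))) :
    ((N ^ (m * c) : ℕ) : ℝ) ≤ Real.exp (7 * (m + 1) ^ 2 * (2 ^ m + 1) * Real.log n *
      (S : ℝ) ^ ((2 * (m : ℝ) - 1) / (2 * m))) := by
  have hn' : (0 : ℝ) < n := by exact_mod_cast hn
  calc ((N ^ (m * c) : ℕ) : ℝ) ≤ (((n ^ (7 * m)) ^ (m * c) : ℕ) : ℝ) := by gcongr
    _ = Real.exp ((7 * m * (m * c) : ℕ) * Real.log n) := by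
        rw [Real.exp_nat_mul, Real.exp_log hn', ← pow_mul]; push_cast; ring_nf
    _ ≤ _ := by
        rw [mul_right_comm _ (Real.log n), Real.exp_le_exp]
        refine mul_le_mul_of_nonneg_right ?_ (Real.log_natCast_nonneg n)
        have hmm : (m : ℝ) * m ≤ (m + 1) ^ 2 := by nlinarith
        calc ((7 * m * (m * c) : ℕ) : ℝ) = 7 * (m * m) * c := by push_cast; ring
          _ ≤ 7 * (m + 1) ^ 2 * ((2 ^ m + 1) * (S : ℝ) ^ ((2 * (m : ℝ) - 1) / (2 * m))) := by
            gcongr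
          _ = _ := by ring

/-- Lemma 4.1: bound on the number of empirical neighbourhood measures compatible
with given empirical colour and pair measures. -/
theorem card_nbhd_measures_bound (𝒳 : Type) [Fintype 𝒳] [DecidableEq 𝒳] :
    ∃ ϑ : ℝ, 0 < ϑ ∧ ∀ (n : ℕ) (ωn : 𝒳 → ℝ) (ϖn : 𝒳 → 𝒳 → ℝ),
      ((∀ a, 0 ≤ ωn a) ∧ (∑ a, ωn a) = 1 ∧ ∀ a, ∃ k : ℕ, (n : ℝ) * ωn a = (k : ℝ)) →
      ((∀ a b, 0 ≤ ϖn a b) ∧ (∀ a b, ϖn a b = ϖn b a) ∧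
        ∀ a b, ∃ k : ℕ, (n : ℝ) * ϖn a b / (1 + if a = b then 1 else 0) = (k : ℝ)) →
      (Set.ncard {ν : (𝒳 × (𝒳 → ℕ)) → ℝ |
          ∃ x : Config 𝒳 n, empColor x = ωn ∧ empPair x = ϖn ∧ empNbhd x = ν} : ℝ) ≤
        Real.exp (ϑ * Real.log n *
          ((n : ℝ) * ∑ a, ∑ b, ϖn a b) ^
            ((2 * (Fintype.card 𝒳 : ℝ) - 1) / (2 * (Fintype.card 𝒳 : ℝ)))) := by
  set m := Fintype.card 𝒳
  refine ⟨7 * (m + 1) ^ 2 * (2 ^ m + 1), by positivity, fun n ωn ϖn _ _ => ?_⟩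
  set s := {x : Config 𝒳 n | empColor x = ωn ∧ empPair x = ϖn}
  have hK : {ν | ∃ x : Config 𝒳 n, empColor x = ωn ∧ empPair x = ϖn ∧ empNbhd x = ν} =
      empNbhd '' s := by
    ext; simp [s, and_assoc]
  rw [hK]
  rcases s.eq_empty_or_nonempty with hempty | ⟨x₀, -, hx₀⟩
  · rw [hempty, Set.image_empty, Set.ncard_empty, Nat.cast_zero]
    positivity
  have hS : (n : ℝ) * ∑ a, ∑ b, ϖn a b = (2 * #x₀.2 : ℕ) := by
    rw [← hx₀, natCast_mul_sum_empPair]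
    norm_cast
  have hs : ∀ x ∈ s, 2 * #x.2 = 2 * #x₀.2 := fun x hx => by
    exact_mod_cast (natCast_mul_sum_empPair x).symm.trans (hx.2 ▸ hS)
  rw [hS]
  rcases Nat.eq_zero_or_pos #x₀.2 with h0 | hpos
  · have hsub : (empNbhd '' s).Subsingleton := by
      rintro _ ⟨x, hx, rfl⟩ _ ⟨y, hy, rfl⟩
      rw [empNbhd_of_edges_eq_empty (card_eq_zero.1 (by linarith [hs x hx])),
        empNbhd_of_edges_eq_empty (card_eq_zero.1 (by linarith [hs y hy])), hx.1, hy.1]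
    exact (Nat.cast_le_one.2 ((Set.ncard_le_one hsub.finite).2 hsub)).trans
      (Real.one_le_exp (by positivity))
  obtain ⟨e, -⟩ := card_pos.1 hpos
  have hn : 2 ≤ n := by have := e.2; omega
  have hm : 1 ≤ m := Fintype.card_pos_iff.2 ⟨x₀.1 e.1.1⟩
  obtain ⟨t, ht, htS⟩ := exists_nat_pow_add_div_le hm (S := 2 * #x₀.2) (by omega)
  calc ((empNbhd '' s).ncard : ℝ)
      ≤ ((_ ^ (m * (t ^ m + 2 * #x₀.2 / t)) : ℕ) : ℝ) := by
        exact_mod_cast ncard_image_empNbhd_le s ht hs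
    _ ≤ _ := natCast_pow_le_exp (by omega)
        (add_one_le_pow_of_le hm hn (by linarith [card_edges_le x₀])) htS

end ColoredLDP
end

section
/- For every m ∈ ℕ there exists ϑ > 0, depending only on m, such that for every vector ℓ ∈ (ℕ∪{0})^m of magnitude n (i.e., the sum of the entries of ℓ equals n, with n ≥ 1), the number of integer partitions of ℓ satisfies #P_m(ℓ) ≤ exp[ ϑ·(log n)·n^{(2m−1)/(2m)} ]. -/
open Filter Topology

namespace ColoredLDP


private lemma mag_sum {m : ℕ} (P : Multiset (Fin m → ℕ)) :
    (P.map (fun p => ∑ i, p i)).sum = ∑ i, P.sum i := by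
  induction P using Multiset.induction with
  | empty => simp
  | cons a P ih => simp [ih, Finset.sum_add_distrib]

private lemma card_le_n {m n : ℕ} {ℓ : Fin m → ℕ} (hsum : ∑ i, ℓ i = n)
    (P : Multiset (Fin m → ℕ)) (h0 : (0 : Fin m → ℕ) ∉ P) (hs : P.sum = ℓ) :
    P.card ≤ n := by
  have h1 : ∀ x ∈ P.map (fun p => ∑ i, p i), 1 ≤ x := by
    intro x hx
    rw [Multiset.mem_map] at hx
    obtain ⟨p, hp, rfl⟩ := hx
    by_contra h
    push_neg at h
    have hz : ∀ i ∈ Finset.univ, p i = 0 :=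
      (Finset.sum_eq_zero_iff).mp (by omega)
    have : p = 0 := funext fun i => hz i (Finset.mem_univ i)
    exact h0 (this ▸ hp)
  have h2 := Multiset.card_nsmul_le_sum h1
  simpa [mag_sum, hs, hsum] using h2

private lemma entry_le_n {m n : ℕ} {ℓ : Fin m → ℕ} (hsum : ∑ i, ℓ i = n)
    (P : Multiset (Fin m → ℕ)) (hs : P.sum = ℓ) :
    ∀ p ∈ P, ∀ i, p i ≤ n := by
  intro p hp i
  have h1 : p ≤ P.sum := Multiset.le_sum_of_mem hp
  calc p i ≤ ℓ i := by rw [← hs]; exact h1 i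
    _ ≤ ∑ j, ℓ j := Finset.single_le_sum (fun j _ => Nat.zero_le _) (Finset.mem_univ i)
    _ = n := hsum

private def Ecode (m n : ℕ) (p : Fin m → ℕ) : Option (Fin m → Fin (n + 1)) :=
  if h : ∀ i, p i ≤ n then some (fun i => ⟨p i, Nat.lt_succ_of_le (h i)⟩) else none

/-- Core combinatorial bound, purely in ℕ. -/
private lemma partitions_le {m n T : ℕ} (hT : 1 ≤ T) (ℓ : Fin m → ℕ)
    (hsum : ∑ i, ℓ i = n) :
    Nat.card {P : Multiset (Fin m → ℕ) // (0 : Fin m → ℕ) ∉ P ∧ P.sum = ℓ} ≤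
      (n + 1) ^ (T ^ m + (m + 1) * (n / T)) := by
  classical
  have hBcard : ∀ P : Multiset (Fin m → ℕ), (0 : Fin m → ℕ) ∉ P → P.sum = ℓ →
      (P.filter (fun p => T ≤ ∑ i, p i)).card ≤ (n / T) := by
    intro P h0 hs
    have hB : ∀ q ∈ P.filter (fun p => T ≤ ∑ i, p i), T ≤ ∑ i, q i := by
      intro q hq
      exact (Multiset.mem_filter.mp hq).2
    set B := P.filter (fun p => T ≤ ∑ i, p i)
    have h1 : ∀ x ∈ B.map (fun p => ∑ i, p i), T ≤ x := by
      intro x hx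
      rw [Multiset.mem_map] at hx
      obtain ⟨p, hp, rfl⟩ := hx
      exact hB p hp
    have h2 : B.card * T ≤ (B.map (fun p => ∑ i, p i)).sum := by
      have := Multiset.card_nsmul_le_sum h1
      simpa [smul_eq_mul] using this
    have h3 : (B.map (fun p => ∑ i, p i)).sum ≤ (P.map (fun p => ∑ i, p i)).sum := by
      obtain ⟨u, hu⟩ := Multiset.le_iff_exists_add.mp
        (Multiset.map_le_map (Multiset.filter_le (fun p => T ≤ ∑ i, p i) P))
      rw [hu, Multiset.sum_add]
      exact Nat.le_add_right _ _
    have h4 : (P.map (fun p => ∑ i, p i)).sum = n := by rw [mag_sum, hs, hsum]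
    exact (Nat.le_div_iff_mul_le hT).mpr (h2.trans (h3.trans_eq h4))
  -- the injection
  let F : {P : Multiset (Fin m → ℕ) // (0 : Fin m → ℕ) ∉ P ∧ P.sum = ℓ} →
      ((Fin m → Fin T) → Fin (n + 1)) × Sym (Option (Fin m → Fin (n + 1))) (n / T) :=
    fun P =>
      ⟨fun v => ⟨P.1.count (fun i => (v i : ℕ)),
        Nat.lt_succ_of_le ((Multiset.count_le_card _ _).trans
          (card_le_n hsum P.1 P.2.1 P.2.2))⟩,
       ⟨(P.1.filter (fun p => T ≤ ∑ i, p i)).map (Ecode m n) +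
          Multiset.replicate ((n / T) - (P.1.filter (fun p => T ≤ ∑ i, p i)).card) none,
        by
          rw [Multiset.card_add, Multiset.card_map, Multiset.card_replicate]
          exact Nat.add_sub_cancel' (hBcard P.1 P.2.1 P.2.2)⟩⟩
  have hinj : Function.Injective F := by
    rintro ⟨P₁, h01, hs1⟩ ⟨P₂, h02, hs2⟩ hF
    have hF1 := congrArg Prod.fst hF
    have hF2 := congrArg (fun z => (Prod.snd z).1) hF
    simp only [F] at hF1 hF2
    ext u
    by_cases hu : ∀ i, u i ≤ n
    · by_cases hsm : ∑ i, u i < T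
      · -- small part : read off the first component
        have hvu : ∀ i, u i < T := fun i =>
          lt_of_le_of_lt (Finset.single_le_sum (fun j _ => Nat.zero_le _)
            (Finset.mem_univ i)) hsm
        have := congrFun hF1 (fun i => (⟨u i, hvu i⟩ : Fin T))
        have h := congrArg Fin.val this
        simpa using h
      · -- big part : read off the second component
        push_neg at hsm
        have hcnt : ∀ P : Multiset (Fin m → ℕ),
            Multiset.count (some (fun i => (⟨u i, Nat.lt_succ_of_le (hu i)⟩ : Fin (n+1))))
              ((P.filter (fun p => T ≤ ∑ i, p i)).map (Ecode m n) +
                Multiset.replicate ((n / T) - (P.filter (fun p => T ≤ ∑ i, p i)).card) none)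
            = Multiset.count u P := by
          intro P
          rw [Multiset.count_add, Multiset.count_replicate, if_neg (by simp),
            Multiset.count_map]
          have hfe : ∀ a : Fin m → ℕ,
              (some (fun i => (⟨u i, Nat.lt_succ_of_le (hu i)⟩ : Fin (n+1))) = Ecode m n a) ↔ a = u := by
            intro a
            constructor
            · intro h
              by_cases ha : ∀ i, a i ≤ n
              · simp only [Ecode, dif_pos ha] at h
                have h' := Option.some.inj h
                funext i
                have := congrFun h' i
                exact (congrArg Fin.val this).symm
              · simp [Ecode, dif_neg ha] at h
            · rintro rfl
              simp only [Ecode, dif_pos hu]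
          calc ((P.filter (fun p => T ≤ ∑ i, p i)).filter
                (fun a => some (fun i => (⟨u i, Nat.lt_succ_of_le (hu i)⟩ : Fin (n+1))) = Ecode m n a)).card
              = ((P.filter (fun p => T ≤ ∑ i, p i)).filter (fun a => a = u)).card := by
                congr 1
                exact Multiset.filter_congr (fun a _ => by rw [hfe])
            _ = Multiset.count u P := by
                rw [Multiset.filter_filter]
                rw [show Multiset.count u P = (P.filter (fun a => a = u)).card from
                  by rw [← Multiset.countP_eq_card_filter]; simp [Multiset.count,
                    eq_comm]]
                congr 1
                apply Multiset.filter_congr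
                intro a _
                constructor
                · rintro ⟨h, _⟩; exact h
                · rintro rfl; exact ⟨rfl, hsm⟩
        have := hF2
        rw [← hcnt P₁, ← hcnt P₂, this]
    · -- entries too big : not a member of either
      push_neg at hu
      obtain ⟨i, hi⟩ := hu
      have h1 : u ∉ P₁ := fun hmem => absurd (entry_le_n hsum P₁ hs1 u hmem i) (by omega)
      have h2 : u ∉ P₂ := fun hmem => absurd (entry_le_n hsum P₂ hs2 u hmem i) (by omega)
      rw [Multiset.count_eq_zero_of_notMem h1, Multiset.count_eq_zero_of_notMem h2]
  calc Nat.card {P : Multiset (Fin m → ℕ) // (0 : Fin m → ℕ) ∉ P ∧ P.sum = ℓ}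
      ≤ Nat.card (((Fin m → Fin T) → Fin (n + 1)) ×
          Sym (Option (Fin m → Fin (n + 1))) (n / T)) :=
        Nat.card_le_card_of_injective F hinj
    _ ≤ (n + 1) ^ (T ^ m + (m + 1) * (n / T)) := by
        rw [Nat.card_eq_fintype_card, Fintype.card_prod, Fintype.card_fun,
          Sym.card_sym_eq_multichoose, Nat.multichoose_eq]
        have hc1 : Fintype.card (Fin m → Fin T) = T ^ m := by
          simp [Fintype.card_fun]
        have hc2 : Fintype.card (Fin (n + 1)) = n + 1 := by simp
        have hc3 : Fintype.card (Option (Fin m → Fin (n + 1))) = (n + 1) ^ m + 1 := by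
          simp [Fintype.card_option, Fintype.card_fun]
        rw [hc1, hc2, hc3]
        have h5 : ((n + 1) ^ m + 1 + (n / T) - 1).choose (n / T) ≤ (n + 1) ^ ((m + 1) * (n / T)) := by
          calc ((n + 1) ^ m + 1 + (n / T) - 1).choose (n / T) ≤ ((n + 1) ^ m + 1 + (n / T) - 1) ^ (n / T) :=
              Nat.choose_le_pow _ _
            _ ≤ ((n + 1) ^ (m + 1)) ^ (n / T) := by
                apply Nat.pow_le_pow_left
                have hKn : n / T ≤ n := Nat.div_le_self n T
                have h6 : 1 ≤ (n + 1) ^ m := Nat.one_le_pow _ _ (by omega)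
                have h7 : n ≤ (n + 1) ^ m * n := Nat.le_mul_of_pos_left n h6
                have h8 : (n + 1) ^ (m + 1) = (n + 1) ^ m * n + (n + 1) ^ m := by ring
                omega
            _ = (n + 1) ^ ((m + 1) * (n / T)) := by rw [← pow_mul]
        calc (n + 1) ^ T ^ m * ((n + 1) ^ m + 1 + (n / T) - 1).choose (n / T)
            ≤ (n + 1) ^ T ^ m * (n + 1) ^ ((m + 1) * (n / T)) :=
              Nat.mul_le_mul_left _ h5
          _ = (n + 1) ^ (T ^ m + (m + 1) * (n / T)) := by rw [← pow_add]


/-- Lemma 4.2: bound on the number of integer partitions of a vector of magnitude `n`. -/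
theorem card_vector_partitions_bound (m : ℕ) :
    ∃ ϑ : ℝ, 0 < ϑ ∧ ∀ (ℓ : Fin m → ℕ) (n : ℕ), 1 ≤ n → (∑ i, ℓ i) = n →
      (Nat.card {P : Multiset (Fin m → ℕ) // (0 : Fin m → ℕ) ∉ P ∧ P.sum = ℓ} : ℝ) ≤
        Real.exp (ϑ * Real.log n *
          (n : ℝ) ^ ((2 * (m : ℝ) - 1) / (2 * (m : ℝ)))) := by
  refine ⟨2 * (2 ^ m + m + 1), by positivity, ?_⟩
  intro ℓ n hn hsum
  rcases Nat.eq_zero_or_pos m with hm0 | hm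
  · exfalso; subst hm0; simp at hsum; omega
  rcases eq_or_lt_of_le hn with h1 | h2
  · -- the case n = 1
    subst h1
    have hsing : ∀ P : Multiset (Fin m → ℕ), (0 : Fin m → ℕ) ∉ P → P.sum = ℓ →
        P = {ℓ} := by
      intro P h0 hs
      have hc := card_le_n hsum P h0 hs
      interval_cases h : P.card
      · exfalso
        have hP : P = 0 := Multiset.card_eq_zero.mp h
        rw [hP] at hs
        rw [← hs] at hsum
        simp at hsum
      · obtain ⟨a, ha⟩ := Multiset.card_eq_one.mp h
        rw [ha] at hs ⊢
        simp at hs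
        rw [hs]
    have hss : Subsingleton {P : Multiset (Fin m → ℕ) // (0 : Fin m → ℕ) ∉ P ∧ P.sum = ℓ} :=
      ⟨fun P Q => Subtype.ext (by
        rw [hsing _ P.2.1 P.2.2, hsing _ Q.2.1 Q.2.2])⟩
    have h1 : Nat.card {P : Multiset (Fin m → ℕ) // (0 : Fin m → ℕ) ∉ P ∧ P.sum = ℓ} ≤ 1 := by
      have := Nat.card_le_card_of_injective
        (fun _ : {P : Multiset (Fin m → ℕ) // (0 : Fin m → ℕ) ∉ P ∧ P.sum = ℓ} => (PUnit.unit : PUnit.{1}))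
        (fun a b _ => hss.allEq a b)
      simpa using this
    calc (Nat.card {P : Multiset (Fin m → ℕ) // (0 : Fin m → ℕ) ∉ P ∧ P.sum = ℓ} : ℝ)
        ≤ 1 := by exact_mod_cast h1
      _ ≤ _ := by
          rw [Nat.cast_one, Real.log_one]
          simp
  -- the main case n ≥ 2
  have hmR : (1:ℝ) ≤ (m:ℝ) := by exact_mod_cast hm
  have hnR : (2:ℝ) ≤ (n:ℝ) := by exact_mod_cast h2
  have hn0 : (0:ℝ) < (n:ℝ) := by linarith
  set e : ℝ := (2 * (m:ℝ) - 1) / (2 * (m:ℝ)) with he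
  set x : ℝ := (n:ℝ) ^ (1 / (2 * (m:ℝ))) with hx
  have hx0 : 0 < x := Real.rpow_pos_of_pos hn0 _
  have hx1 : 1 ≤ x := Real.one_le_rpow (by linarith) (by positivity)
  set T : ℕ := ⌈x⌉₊ with hTdef
  have hT1 : 1 ≤ T := Nat.one_le_ceil_iff.mpr hx0
  have hb := partitions_le hT1 ℓ hsum
  have hlogn : 0 ≤ Real.log n := Real.log_nonneg (by linarith)
  have hlog : Real.log ((n:ℝ) + 1) ≤ 2 * Real.log n := by
    have h3 : ((n:ℝ) + 1) ≤ (n:ℝ) ^ (2:ℕ) := by nlinarith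
    calc Real.log ((n:ℝ) + 1) ≤ Real.log ((n:ℝ) ^ (2:ℕ)) :=
        Real.log_le_log (by positivity) h3
      _ = 2 * Real.log n := by rw [Real.log_pow]; norm_num
  have hxm : x ^ m = (n:ℝ) ^ ((1:ℝ)/2) := by
    rw [hx, ← Real.rpow_natCast ((n:ℝ) ^ (1 / (2 * (m:ℝ)))) m, ← Real.rpow_mul (le_of_lt hn0)]
    congr 1
    have : (m:ℝ) ≠ 0 := by linarith
    field_simp
  have hhalf : (n:ℝ) ^ ((1:ℝ)/2) ≤ (n:ℝ) ^ e := by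
    apply Real.rpow_le_rpow_of_exponent_le (by linarith)
    rw [he, div_le_div_iff₀ (by norm_num) (by linarith)]
    ring_nf
    linarith
  have hTx : (T:ℝ) ≤ 2 * x := by
    have := Nat.ceil_lt_add_one (le_of_lt hx0)
    rw [hTdef]
    linarith
  have hTm : ((T ^ m : ℕ) : ℝ) ≤ 2 ^ m * (n:ℝ) ^ e := by
    push_cast
    calc (T:ℝ) ^ m ≤ (2 * x) ^ m := by
          apply pow_le_pow_left₀ (by positivity) hTx
      _ = 2 ^ m * x ^ m := mul_pow 2 x m
      _ = 2 ^ m * (n:ℝ) ^ ((1:ℝ)/2) := by rw [hxm]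
      _ ≤ 2 ^ m * (n:ℝ) ^ e := by
          apply mul_le_mul_of_nonneg_left hhalf (by positivity)
  have hKe : ((n / T : ℕ) : ℝ) ≤ (n:ℝ) ^ e := by
    calc ((n / T : ℕ) : ℝ) ≤ (n:ℝ) / (T:ℝ) := Nat.cast_div_le
      _ ≤ (n:ℝ) / x := by
          apply div_le_div_of_nonneg_left (le_of_lt hn0) hx0 (Nat.le_ceil x)
      _ = (n:ℝ) ^ e := by
          rw [hx, he]
          rw [show (2 * (m:ℝ) - 1) / (2 * (m:ℝ)) = 1 - 1 / (2 * (m:ℝ)) by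
            field_simp]
          rw [Real.rpow_sub hn0, Real.rpow_one]
  calc (Nat.card {P : Multiset (Fin m → ℕ) // (0 : Fin m → ℕ) ∉ P ∧ P.sum = ℓ} : ℝ)
      ≤ (((n + 1) ^ (T ^ m + (m + 1) * (n / T)) : ℕ) : ℝ) := by exact_mod_cast hb
    _ = Real.exp (Real.log ((n:ℝ) + 1) * ((T ^ m + (m + 1) * (n / T) : ℕ) : ℝ)) := by
        push_cast
        rw [← Real.rpow_natCast ((n:ℝ)+1) (T ^ m + (m + 1) * (n / T)),
          Real.rpow_def_of_pos (by positivity)]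
        push_cast
        ring_nf
    _ ≤ Real.exp (2 * (2 ^ m + m + 1) * Real.log n * (n:ℝ) ^ e) := by
        apply Real.exp_le_exp.mpr
        have hA : ((T ^ m + (m + 1) * (n / T) : ℕ) : ℝ) ≤ (2 ^ m + m + 1) * (n:ℝ) ^ e := by
          push_cast
          push_cast at hTm hKe
          nlinarith [hKe, hTm, Real.rpow_nonneg (le_of_lt hn0) e]
        have hA0 : (0:ℝ) ≤ ((T ^ m + (m + 1) * (n / T) : ℕ) : ℝ) := by positivity
        have hlogn1 : 0 ≤ Real.log ((n:ℝ)+1) := Real.log_nonneg (by linarith)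
        calc Real.log ((n:ℝ) + 1) * ((T ^ m + (m + 1) * (n / T) : ℕ) : ℝ)
            ≤ (2 * Real.log n) * ((T ^ m + (m + 1) * (n / T) : ℕ) : ℝ) :=
              mul_le_mul_of_nonneg_right hlog hA0
          _ ≤ (2 * Real.log n) * ((2 ^ m + m + 1) * (n:ℝ) ^ e) := by
              apply mul_le_mul_of_nonneg_left hA (by positivity)
          _ = 2 * (2 ^ m + m + 1) * Real.log n * (n:ℝ) ^ e := by ring

end ColoredLDP
end

section
/- Let 𝒳 be a finite set, ϖ a finite symmetric measure on 𝒳×𝒳 and ν a probability measure on 𝒳×ℕ^𝒳 such that (ϖ,ν) is sub-consistent. Then for every ε > 0 there exist a finite measure ϖ̂ on 𝒳×𝒳 and a probability measure ν̂ on 𝒳×ℕ^𝒳 such that |ϖ(a,b) − ϖ̂(a,b)| ≤ ε for all a,b ∈ 𝒳, d(ν,ν̂) ≤ ε, and (ϖ̂,ν̂) is consistent. -/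
open Filter Topology

namespace ColoredLDP

/-- Lemma 4.6 (approximation step 1): a sub-consistent pair can be approximated by a
consistent one. -/
theorem approximation_step1 (𝒳 : Type) [Fintype 𝒳] [DecidableEq 𝒳]
    (ϖ : 𝒳 → 𝒳 → ℝ) (hϖ0 : ∀ a b, 0 ≤ ϖ a b) (hϖsym : ∀ a b, ϖ a b = ϖ b a)
    (ν : (𝒳 × (𝒳 → ℕ)) → ℝ) (hν : IsPMF ν) (hsub : SubConsistent ϖ ν)
    (ε : ℝ) (hε : 0 < ε) :
    ∃ (ϖ' : 𝒳 → 𝒳 → ℝ) (ν' : (𝒳 × (𝒳 → ℕ)) → ℝ),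
      (∀ a b, 0 ≤ ϖ' a b) ∧ IsPMF ν' ∧
      (∀ a b, |ϖ a b - ϖ' a b| ≤ ε) ∧ dTV ν ν' ≤ ε ∧
      (∀ a b : 𝒳, (∑' ℓ : 𝒳 → ℕ, ENNReal.ofReal (ν' (a, ℓ) * (ℓ b : ℝ))) =
        ENNReal.ofReal (ϖ' a b)) := by
  classical
  obtain ⟨hν0, hνsum⟩ := hν
  -- 𝒳 is nonempty
  have hne : Nonempty 𝒳 := by
    by_contra h
    rw [not_nonempty_iff] at h
    have : IsEmpty (𝒳 × (𝒳 → ℕ)) := by infer_instance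
    have h0 : HasSum ν 0 := hasSum_empty
    exact one_ne_zero (hνsum.unique h0)
  set k : ℕ := Fintype.card 𝒳 with hkdef
  have hk : 0 < k := Fintype.card_pos
  have hkR : (1:ℝ) ≤ (k:ℝ) := by exact_mod_cast hk
  set t : ℝ := min ε 1 with htdef
  have ht0 : 0 < t := lt_min hε one_pos
  have ht1 : t ≤ 1 := min_le_right _ _
  have htε : t ≤ ε := min_le_left _ _
  -- the functions whose tsum defines pairOf ν
  set f : 𝒳 → 𝒳 → (𝒳 → ℕ) → ℝ := fun a b ℓ => ν (a, ℓ) * (ℓ b : ℝ) with hfdef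
  have hf0 : ∀ a b ℓ, 0 ≤ f a b ℓ := fun a b ℓ =>
    mul_nonneg (hν0 _) (Nat.cast_nonneg _)
  have hfs : ∀ a b, Summable (f a b) := by
    intro a b
    have hfin : (∑' ℓ : 𝒳 → ℕ, ENNReal.ofReal (f a b ℓ)) ≠ ⊤ :=
      ne_top_of_le_ne_top ENNReal.ofReal_ne_top (hsub a b)
    have := ENNReal.summable_toReal hfin
    exact this.congr fun ℓ => ENNReal.toReal_ofReal (hf0 a b ℓ)
  set P : 𝒳 → 𝒳 → ℝ := fun a b => ∑' ℓ, f a b ℓ with hPdef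
  have hP0 : ∀ a b, 0 ≤ P a b := fun a b => tsum_nonneg (hf0 a b)
  have hPϖ : ∀ a b, P a b ≤ ϖ a b := by
    intro a b
    have h1 : ENNReal.ofReal (P a b) = ∑' ℓ, ENNReal.ofReal (f a b ℓ) :=
      ENNReal.ofReal_tsum_of_nonneg (hf0 a b) (hfs a b)
    have h2 : ENNReal.ofReal (P a b) ≤ ENNReal.ofReal (ϖ a b) := h1 ▸ hsub a b
    exact (ENNReal.ofReal_le_ofReal_iff (hϖ0 a b)).mp h2
  set E : 𝒳 → 𝒳 → ℝ := fun a b => ϖ a b - (1 - t) * P a b with hEdef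
  have hE0 : ∀ a b, 0 ≤ E a b := by
    intro a b
    have h1 : (1 - t) * P a b ≤ P a b := by nlinarith [hP0 a b]
    have := hPϖ a b
    simp only [hEdef]; linarith
  set c : ℝ := t / k with hcdef
  have hc0 : 0 < c := div_pos ht0 (by positivity)
  have hcε : c ≤ ε := le_trans (div_le_self ht0.le hkR) htε
  set L : 𝒳 → 𝒳 → ℕ := fun a b => ⌊E a b / c⌋₊ with hLdef
  have hLle : ∀ a b, c * (L a b : ℝ) ≤ E a b := by
    intro a b
    have := Nat.floor_le (div_nonneg (hE0 a b) hc0.le)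
    calc c * (L a b : ℝ) ≤ c * (E a b / c) := by
          exact mul_le_mul_of_nonneg_left this hc0.le
      _ = E a b := by field_simp
  have hLgt : ∀ a b, E a b < c * (L a b : ℝ) + c := by
    intro a b
    have h := Nat.lt_floor_add_one (E a b / c)
    have := (div_lt_iff₀ hc0).mp h
    calc E a b < ((L a b : ℝ) + 1) * c := this
      _ = c * (L a b : ℝ) + c := by ring
  -- the pmf ρ putting mass 1/k at (a, L a)
  set ρ : 𝒳 × (𝒳 → ℕ) → ℝ := fun x => if x.2 = L x.1 then 1 / (k : ℝ) else 0 with hρdef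
  have hρ0 : ∀ x, 0 ≤ ρ x := by
    intro x; simp only [hρdef]; split <;> positivity
  set s : Finset (𝒳 × (𝒳 → ℕ)) := Finset.image (fun a => (a, L a)) Finset.univ with hsdef
  have hρ_zero : ∀ x ∉ s, ρ x = 0 := by
    intro x hx
    simp only [hρdef]
    rw [if_neg]
    intro hx2
    apply hx
    simp only [hsdef, Finset.mem_image]
    exact ⟨x.1, Finset.mem_univ _, by rw [← hx2]⟩
  have hρ1 : HasSum ρ 1 := by
    have h1 : HasSum ρ (∑ x ∈ s, ρ x) := hasSum_sum_of_ne_finset_zero hρ_zero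
    have hinj : Function.Injective (fun a : 𝒳 => (a, L a)) := by
      intro a a' h; exact congrArg Prod.fst h
    have h2 : ∑ x ∈ s, ρ x = ∑ a : 𝒳, ρ (a, L a) := by
      rw [hsdef, Finset.sum_image (fun a _ a' _ h => hinj h)]
    have h3 : ∑ a : 𝒳, ρ (a, L a) = 1 := by
      simp only [hρdef, if_pos rfl]
      rw [Finset.sum_const, Finset.card_univ, ← hkdef, nsmul_eq_mul]
      field_simp
    rwa [h2, h3] at h1
  -- g a b : contribution of ρ to the pair measure
  set g : 𝒳 → 𝒳 → (𝒳 → ℕ) → ℝ := fun a b ℓ => ρ (a, ℓ) * (ℓ b : ℝ) with hgdef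
  have hg_zero : ∀ a b, ∀ ℓ ∉ ({L a} : Finset (𝒳 → ℕ)), g a b ℓ = 0 := by
    intro a b ℓ hℓ
    simp only [Finset.mem_singleton] at hℓ
    simp [hgdef, hρdef, hℓ]
  have hgs : ∀ a b, Summable (g a b) := fun a b =>
    summable_of_ne_finset_zero (hg_zero a b)
  have hg_eq : ∀ a b, ∑' ℓ, g a b ℓ = (1 / (k:ℝ)) * (L a b : ℝ) := by
    intro a b
    rw [tsum_eq_single (L a) (by
      intro ℓ hℓ
      simp [hgdef, hρdef, hℓ])]
    simp [hgdef, hρdef]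
  -- the approximating pair
  set ν' : 𝒳 × (𝒳 → ℕ) → ℝ := fun x => (1 - t) * ν x + t * ρ x with hν'def
  set ϖ' : 𝒳 → 𝒳 → ℝ := fun a b => (1 - t) * P a b + t * ((1 / (k:ℝ)) * (L a b : ℝ))
    with hϖ'def
  have htk : ∀ a b, t * ((1 / (k:ℝ)) * (L a b : ℝ)) = c * (L a b : ℝ) := by
    intro a b; rw [hcdef]; ring
  have hν'0 : ∀ x, 0 ≤ ν' x := by
    intro x
    exact add_nonneg (mul_nonneg (by linarith) (hν0 x)) (mul_nonneg ht0.le (hρ0 x))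
  have hν'sum : HasSum ν' 1 := by
    have := (hνsum.mul_left (1 - t)).add (hρ1.mul_left t)
    simpa using this
  refine ⟨ϖ', ν', ?_, ⟨hν'0, hν'sum⟩, ?_, ?_, ?_⟩
  · intro a b
    exact add_nonneg (mul_nonneg (by linarith) (hP0 a b))
      (mul_nonneg ht0.le (by positivity))
  · intro a b
    have h1 : ϖ a b - ϖ' a b = E a b - c * (L a b : ℝ) := by
      rw [hϖ'def]; simp only; rw [htk a b, hEdef]; ring
    rw [h1, abs_of_nonneg (by linarith [hLle a b])]
    linarith [hLgt a b]
  · -- total variation bound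
    have hνs : Summable ν := hνsum.summable
    have hρs : Summable ρ := hρ1.summable
    have hν's : Summable ν' := hν'sum.summable
    have habs : Summable fun y => |ν y - ν' y| := (hνs.sub hν's).abs
    have hbound : ∀ y, |ν y - ν' y| ≤ t * (ν y + ρ y) := by
      intro y
      have h1 : ν y - ν' y = t * (ν y - ρ y) := by rw [hν'def]; ring
      rw [h1, abs_mul, abs_of_nonneg ht0.le]
      have : |ν y - ρ y| ≤ ν y + ρ y := by
        rw [abs_sub_le_iff]
        constructor <;> nlinarith [hν0 y, hρ0 y]
      nlinarith
    have hsum2 : Summable fun y => t * (ν y + ρ y) := ((hνs.add hρs).mul_left t)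
    have h2 : ∑' y, |ν y - ν' y| ≤ ∑' y, t * (ν y + ρ y) :=
      Summable.tsum_le_tsum hbound habs hsum2
    have h3 : ∑' y, t * (ν y + ρ y) = 2 * t := by
      rw [tsum_mul_left, Summable.tsum_add hνs hρs, hνsum.tsum_eq, hρ1.tsum_eq]; ring
    rw [dTV]
    rw [h3] at h2
    linarith
  · intro a b
    have hnn : ∀ ℓ : 𝒳 → ℕ, 0 ≤ ν' (a, ℓ) * (ℓ b : ℝ) := fun ℓ =>
      mul_nonneg (hν'0 _) (Nat.cast_nonneg _)
    have hcongr : ∀ ℓ : 𝒳 → ℕ, ν' (a, ℓ) * (ℓ b : ℝ) = (1 - t) * f a b ℓ + t * g a b ℓ := by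
      intro ℓ; rw [hν'def, hfdef, hgdef]; ring
    have hsum' : Summable fun ℓ : 𝒳 → ℕ => ν' (a, ℓ) * (ℓ b : ℝ) := by
      refine (((hfs a b).mul_left (1 - t)).add ((hgs a b).mul_left t)).congr fun ℓ => ?_
      rw [hcongr ℓ]
    have key : ∑' ℓ : 𝒳 → ℕ, ν' (a, ℓ) * (ℓ b : ℝ) = ϖ' a b := by
      rw [tsum_congr hcongr,
        Summable.tsum_add ((hfs a b).mul_left _) ((hgs a b).mul_left _),
        tsum_mul_left, tsum_mul_left, hg_eq a b]
    rw [← key]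
    exact (ENNReal.ofReal_tsum_of_nonneg hnn hsum').symm


end ColoredLDP
end

section
/- Let 𝒳 be a finite set. Suppose ω_n ∈ M_n(𝒳) converges to ω with ω(a) > 0 for all a ∈ 𝒳, ϖ_n ∈ M̃_{*,n}(𝒳×𝒳) converges to ϖ, ν is a probability measure on 𝒳×ℕ^𝒳 with 𝒳-marginal ν₁ = ω, and (ϖ,ν) is sub-consistent. Then for every ε > 0 there exists n(ε) such that for all n ≥ n(ε) there exists a probability measure ν_n on 𝒳×ℕ^𝒳 with n·ν_n(a,ℓ) ∈ ℕ for all (a,ℓ), Φ(ν_n) = (ω_n,ϖ_n), and d(ν_n,ν) ≤ ε. -/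
/-!
Round `ν` down: on a finite set `L` of neighbourhoods carrying `ν`-mass at least `1 - δ`, take
the counts `m(a, ℓ) = ⌊(1 - δ) n ν(a, ℓ)⌋`. Since `ω_n → ω > 0` and `ϖ_n → ϖ`, for large `n` the
colour totals of `m` stay strictly below `n ω_n(a)` and, by sub-consistency, its pair totals stay
below `n ϖ_n(a, b)`. Each colour `a` is then completed exactly: one atom at the vector of missing
pair counts supplies all missing pair mass, and the remaining colour mass is put at `ℓ = 0`, which
carries no pair mass. The rounded-down measure `m / n` lies below both `ν` and `ν_n`, so
`d(ν_n, ν) ≤ 1 - ‖m / n‖ ≤ 2δ + |𝒳| |L| / n`.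
-/

open Filter Topology

theorem Filter.Tendsto.eventually_mul_le {α : Type*} {l : Filter α} {u : α → ℝ} {x t : ℝ}
    (hu : Tendsto u l (𝓝 x)) (hu0 : ∀ i, 0 ≤ u i) (ht0 : 0 ≤ t) (ht1 : t < 1) :
    ∀ᶠ i in l, t * x ≤ u i := by
  rcases lt_or_ge (t * x) x with h | h
  · exact (hu.eventually_const_lt h).mono fun i hi => hi.le
  · have hx : x ≤ 0 := by nlinarith
    exact Eventually.of_forall fun i => (mul_nonpos_of_nonneg_of_nonpos ht0 hx).trans (hu0 i)

theorem exists_natCast_eq_of_div_eq {x : ℝ} {p : Prop} [Decidable p]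
    (h : ∃ k : ℕ, x / (1 + if p then 1 else 0) = k) : ∃ K : ℕ, x = K := by
  obtain ⟨k, h⟩ := h
  refine ⟨k * (1 + if p then 1 else 0), ?_⟩
  rw [div_eq_iff (by split_ifs <;> norm_num)] at h
  rw [h]
  push_cast
  rfl

namespace Finsupp

theorem exists_le_degree_eq_weight_eq {σ : Type*} (m : (σ → ℕ) →₀ ℕ) {k : ℕ} {K : σ → ℕ}
    (hk : m.degree < k) (hK : weight id m ≤ K) :
    ∃ c : (σ → ℕ) →₀ ℕ, m ≤ c ∧ c.degree = k ∧ weight id c = K := by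
  refine ⟨m + (single (K - weight id m) 1 + single 0 (k - m.degree - 1)), le_self_add, ?_, ?_⟩
  · simp only [map_add, degree_single]
    omega
  · simp only [map_add, weight_single, id, one_smul, smul_zero, add_zero]
    exact add_tsub_cancel_of_le hK

theorem degree_indicator {ι M : Type*} [AddCommMonoid M] (s : Finset ι) (f : ι → M) :
    (indicator s fun i _ => f i).degree = ∑ i ∈ s, f i := by
  rw [degree_apply, Finset.sum_subset (support_indicator_subset _ _) fun i _ hi => by
    rwa [notMem_support_iff] at hi]
  exact Finset.sum_congr rfl fun i hi => indicator_of_mem hi _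

end Finsupp

namespace ColoredLDP

open Finsupp

variable {𝒳 : Type}

theorem hasSum_sum_marg [Fintype 𝒳] {ν : 𝒳 × (𝒳 → ℕ) → ℝ} (hν : Summable ν) :
    HasSum ν (∑ a, marg ν a) := by
  convert hν.hasSum using 1
  exact (hasSum_fintype _).unique (hν.hasSum.prod_fiberwise fun a => (hν.prod_factor a).hasSum)

theorem dTV_le_one_sub_of_le {ν ν' μ : 𝒳 × (𝒳 → ℕ) → ℝ} {s : ℝ} (hν : HasSum ν 1)
    (hν' : HasSum ν' 1) (hμ : HasSum μ s) (hμν : μ ≤ ν) (hμν' : μ ≤ ν') : dTV ν ν' ≤ 1 - s := by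
  have hle : ∀ y, |ν y - ν' y| ≤ (ν y - μ y) + (ν' y - μ y) := fun y =>
    abs_sub_le_iff.2 ⟨by linarith [hμν' y], by linarith [hμν y]⟩
  have := hasSum_le hle (hν.summable.sub hν'.summable).abs.hasSum ((hν.sub hμ).add (hν'.sub hμ))
  rw [dTV]
  linarith

theorem SubConsistent.sum_mul_le {ϖ : 𝒳 → 𝒳 → ℝ} {ν : 𝒳 × (𝒳 → ℕ) → ℝ}
    (h : SubConsistent ϖ ν) (hν : ∀ y, 0 ≤ ν y) {a b : 𝒳} (hϖ : 0 ≤ ϖ a b)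
    (L : Finset (𝒳 → ℕ)) : ∑ ℓ ∈ L, ν (a, ℓ) * ℓ b ≤ ϖ a b := by
  rw [← ENNReal.ofReal_le_ofReal_iff hϖ,
    ENNReal.ofReal_sum_of_nonneg fun ℓ _ => mul_nonneg (hν _) (Nat.cast_nonneg _)]
  exact (ENNReal.sum_le_tsum L).trans (h a b)

theorem IsPMF.exists_finset_one_sub_le_sum [Fintype 𝒳] {ν : 𝒳 × (𝒳 → ℕ) → ℝ} (hν : IsPMF ν)
    {δ : ℝ} (hδ : 0 < δ) : ∃ L : Finset (𝒳 → ℕ), 1 - δ ≤ ∑ a, ∑ ℓ ∈ L, ν (a, ℓ) := by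
  have hlim : Tendsto (fun L : Finset (𝒳 → ℕ) => ∑ a, ∑ ℓ ∈ L, ν (a, ℓ)) atTop (𝓝 1) := by
    rw [← (hasSum_sum_marg hν.2.summable).unique hν.2]
    exact tendsto_finsetSum _ fun a _ => (hν.2.summable.prod_factor a).hasSum
  exact ((hlim.eventually_const_lt (by linarith)).mono fun L h => h.le).exists

noncomputable def countMeasure (n : ℕ) (c : 𝒳 → (𝒳 → ℕ) →₀ ℕ) (y : 𝒳 × (𝒳 → ℕ)) : ℝ :=
  c y.1 y.2 / n

section countMeasure

variable {n : ℕ} {c : 𝒳 → (𝒳 → ℕ) →₀ ℕ} {ν : 𝒳 × (𝒳 → ℕ) → ℝ} {t : ℝ}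

theorem countMeasure_nonneg (y : 𝒳 × (𝒳 → ℕ)) : 0 ≤ countMeasure n c y :=
  div_nonneg (Nat.cast_nonneg _) (Nat.cast_nonneg _)

theorem degree_div_eq_sum_countMeasure (a : 𝒳) :
    ((c a).degree : ℝ) / n = ∑ ℓ ∈ (c a).support, countMeasure n c (a, ℓ) := by
  simp [countMeasure, degree_apply, Finset.sum_div]

theorem weight_div_eq_sum_countMeasure (a b : 𝒳) :
    (weight id (c a) b : ℝ) / n = ∑ ℓ ∈ (c a).support, countMeasure n c (a, ℓ) * ℓ b := by
  simp [countMeasure, weight_apply, Finsupp.sum, Finset.sum_div, Finset.sum_apply,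
    div_mul_eq_mul_div]

theorem marg_countMeasure (a : 𝒳) : marg (countMeasure n c) a = (c a).degree / n := by
  rw [degree_div_eq_sum_countMeasure, marg]
  exact tsum_eq_sum fun ℓ hℓ => by simp_all [countMeasure]

theorem pairOf_countMeasure (a b : 𝒳) :
    pairOf (countMeasure n c) a b = weight id (c a) b / n := by
  rw [weight_div_eq_sum_countMeasure, pairOf]
  exact tsum_eq_sum fun ℓ hℓ => by simp_all [countMeasure]

theorem hasSum_countMeasure [Fintype 𝒳] :
    HasSum (countMeasure n c) (∑ a, ((c a).degree : ℝ) / n) := by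
  have hsum : Summable (countMeasure n c) := by
    refine (summable_prod_of_nonneg fun y => countMeasure_nonneg y).2 ⟨fun a => ?_, ?_⟩
    · exact summable_of_ne_finset_zero (s := (c a).support) fun ℓ hℓ => by simp_all [countMeasure]
    · exact (hasSum_fintype _).summable
  simpa only [marg_countMeasure] using hasSum_sum_marg hsum

theorem isPMF_countMeasure [Fintype 𝒳] (hn : n ≠ 0) (hc : ∑ a, (c a).degree = n) :
    IsPMF (countMeasure n c) := by
  refine ⟨countMeasure_nonneg, ?_⟩
  convert hasSum_countMeasure
  rw [← Finset.sum_div, ← Nat.cast_sum, hc, div_self (Nat.cast_ne_zero.2 hn)]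

theorem countMeasure_mono {m : 𝒳 → (𝒳 → ℕ) →₀ ℕ} (h : m ≤ c) :
    countMeasure n m ≤ countMeasure n c := fun y => by
  unfold countMeasure
  gcongr
  exact h y.1 y.2

theorem natCast_mul_countMeasure (hn : n ≠ 0) (y : 𝒳 × (𝒳 → ℕ)) :
    (n : ℝ) * countMeasure n c y = c y.1 y.2 := by
  rw [countMeasure, mul_div_cancel₀ _ (Nat.cast_ne_zero.2 hn)]

theorem degree_div_le_of_countMeasure_le (hν : IsPMF ν) (ht : 0 ≤ t)
    (h : ∀ y, countMeasure n c y ≤ t * ν y) (a : 𝒳) :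
    ((c a).degree : ℝ) / n ≤ t * marg ν a := by
  rw [degree_div_eq_sum_countMeasure, marg]
  calc ∑ ℓ ∈ (c a).support, countMeasure n c (a, ℓ)
      ≤ ∑ ℓ ∈ (c a).support, t * ν (a, ℓ) := Finset.sum_le_sum fun ℓ _ => h _
    _ ≤ t * ∑' ℓ, ν (a, ℓ) := by
      rw [← Finset.mul_sum]
      gcongr
      exact (hν.2.summable.prod_factor a).sum_le_tsum _ fun ℓ _ => hν.1 _

theorem weight_div_le_of_countMeasure_le {ϖ : 𝒳 → 𝒳 → ℝ} (hsub : SubConsistent ϖ ν)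
    (hν : ∀ y, 0 ≤ ν y) (ht : 0 ≤ t) (h : ∀ y, countMeasure n c y ≤ t * ν y) {a b : 𝒳}
    (hϖ : 0 ≤ ϖ a b) : (weight id (c a) b : ℝ) / n ≤ t * ϖ a b := by
  rw [weight_div_eq_sum_countMeasure]
  calc ∑ ℓ ∈ (c a).support, countMeasure n c (a, ℓ) * ℓ b
      ≤ ∑ ℓ ∈ (c a).support, t * (ν (a, ℓ) * ℓ b) := Finset.sum_le_sum fun ℓ _ => by
        rw [← mul_assoc]
        exact mul_le_mul_of_nonneg_right (h _) (Nat.cast_nonneg _)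
    _ ≤ t * ϖ a b := by
      rw [← Finset.mul_sum]
      gcongr
      exact hsub.sum_mul_le hν hϖ _

end countMeasure

noncomputable def floorCount (t : ℝ) (n : ℕ) (ν : 𝒳 × (𝒳 → ℕ) → ℝ) (L : Finset (𝒳 → ℕ))
    (a : 𝒳) : (𝒳 → ℕ) →₀ ℕ :=
  Finsupp.indicator L fun ℓ _ => ⌊t * n * ν (a, ℓ)⌋₊

section floorCount

variable {t : ℝ} {n : ℕ} {ν : 𝒳 × (𝒳 → ℕ) → ℝ} {L : Finset (𝒳 → ℕ)}

theorem countMeasure_floorCount_le (ht : 0 ≤ t) (hν : ∀ y, 0 ≤ ν y) (hn : n ≠ 0)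
    (y : 𝒳 × (𝒳 → ℕ)) : countMeasure n (floorCount t n ν L) y ≤ t * ν y := by
  classical
  have hn' : (0 : ℝ) < n := by positivity
  have htν : 0 ≤ t * n * ν y := by have := hν y; positivity
  rw [countMeasure, div_le_iff₀ hn', floorCount, indicator_apply]
  split_ifs
  · exact (Nat.floor_le htν).trans_eq (by ring)
  · simpa [mul_right_comm] using htν

theorem le_sum_degree_floorCount [Fintype 𝒳] (hn : n ≠ 0) :
    t * ∑ a, ∑ ℓ ∈ L, ν (a, ℓ) - (Fintype.card 𝒳 * L.card : ℝ) / n ≤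
      ∑ a, ((floorCount t n ν L a).degree : ℝ) / n := by
  have hn' : (0 : ℝ) < n := by positivity
  calc t * ∑ a, ∑ ℓ ∈ L, ν (a, ℓ) - (Fintype.card 𝒳 * L.card : ℝ) / n
      = ∑ a, ∑ ℓ ∈ L, (t * n * ν (a, ℓ) - 1) / n := by
        simp only [sub_div, Finset.sum_sub_distrib, Finset.sum_const, Finset.card_univ,
          nsmul_eq_mul, Finset.mul_sum]
        field_simp
    _ ≤ ∑ a, ∑ ℓ ∈ L, (⌊t * n * ν (a, ℓ)⌋₊ : ℝ) / n := by
        gcongr with a _ ℓ _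
        linarith [Nat.lt_floor_add_one (t * n * ν (a, ℓ))]
    _ = ∑ a, ((floorCount t n ν L a).degree : ℝ) / n := by
        simp [floorCount, degree_indicator, Finset.sum_div]

end floorCount

theorem exists_le_isPMF_countMeasure [Fintype 𝒳] {n : ℕ} (hn : n ≠ 0) {ωn : 𝒳 → ℝ}
    (hωn : ∑ a, ωn a = 1) (hωnℕ : ∀ a, ∃ k : ℕ, (n : ℝ) * ωn a = k) {ϖn : 𝒳 → 𝒳 → ℝ}
    (hϖnℕ : ∀ a b, ∃ K : ℕ, (n : ℝ) * ϖn a b = K) (m : 𝒳 → (𝒳 → ℕ) →₀ ℕ)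
    (hmω : ∀ a, ((m a).degree : ℝ) / n < ωn a) (hmϖ : ∀ a b, (weight id (m a) b : ℝ) / n ≤ ϖn a b) :
    ∃ c, m ≤ c ∧ IsPMF (countMeasure n c) ∧ marg (countMeasure n c) = ωn ∧
      ∀ a b, pairOf (countMeasure n c) a b = ϖn a b := by
  choose k hk using hωnℕ
  choose K hK using hϖnℕ
  have hn' : (0 : ℝ) < n := by positivity
  have hdeg : ∀ a, (m a).degree < k a := fun a => by
    have := hmω a
    rw [div_lt_iff₀' hn', hk] at this
    exact_mod_cast this
  have hweight : ∀ a, weight id (m a) ≤ K a := fun a b => by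
    have := hmϖ a b
    rw [div_le_iff₀' hn', hK] at this
    exact_mod_cast this
  choose c hmc hck hcK using fun a => exists_le_degree_eq_weight_eq (m a) (hdeg a) (hweight a)
  have hsum : ∑ a, (c a).degree = n := by
    have : ∑ a, (k a : ℝ) = n := by simp_rw [← hk, ← Finset.mul_sum, hωn, mul_one]
    simp only [hck]
    exact_mod_cast this
  refine ⟨c, hmc, isPMF_countMeasure hn hsum, funext fun a => ?_, fun a b => ?_⟩
  · rw [marg_countMeasure, hck, ← hk, mul_div_cancel_left₀ _ hn'.ne']
  · rw [pairOf_countMeasure, hcK, ← hK, mul_div_cancel_left₀ _ hn'.ne']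

theorem exists_isPMF_marg_pairOf_eq_dTV_le [Fintype 𝒳] {n : ℕ} (hn : n ≠ 0) {ωn : 𝒳 → ℝ}
    (hωn : ∑ a, ωn a = 1) (hωnℕ : ∀ a, ∃ k : ℕ, (n : ℝ) * ωn a = k) {ϖn : 𝒳 → 𝒳 → ℝ}
    (hϖnℕ : ∀ a b, ∃ K : ℕ, (n : ℝ) * ϖn a b = K) {ν : 𝒳 × (𝒳 → ℕ) → ℝ} (hν : IsPMF ν)
    {ϖ : 𝒳 → 𝒳 → ℝ} (hϖ0 : ∀ a b, 0 ≤ ϖ a b) (hsub : SubConsistent ϖ ν) {t : ℝ} (ht0 : 0 ≤ t)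
    (ht1 : t ≤ 1) (hω : ∀ a, t * marg ν a < ωn a) (hϖ : ∀ a b, t * ϖ a b ≤ ϖn a b)
    (L : Finset (𝒳 → ℕ)) :
    ∃ νn, IsPMF νn ∧ (∀ y, ∃ k : ℕ, (n : ℝ) * νn y = k) ∧ marg νn = ωn ∧
      (∀ a b, pairOf νn a b = ϖn a b) ∧
      dTV νn ν ≤ 1 - t * ∑ a, ∑ ℓ ∈ L, ν (a, ℓ) + (Fintype.card 𝒳 * L.card : ℝ) / n := by
  set m := floorCount t n ν L
  have hm : ∀ y, countMeasure n m y ≤ t * ν y := countMeasure_floorCount_le ht0 hν.1 hn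
  obtain ⟨c, hmc, hc, hcω, hcϖ⟩ := exists_le_isPMF_countMeasure hn hωn hωnℕ hϖnℕ m
    (fun a => (degree_div_le_of_countMeasure_le hν ht0 hm a).trans_lt (hω a))
    (fun a b => (weight_div_le_of_countMeasure_le hsub hν.1 ht0 hm (hϖ0 a b)).trans (hϖ a b))
  refine ⟨countMeasure n c, hc, fun y => ⟨_, natCast_mul_countMeasure hn y⟩, hcω, hcϖ, ?_⟩
  calc dTV (countMeasure n c) ν ≤ 1 - ∑ a, ((m a).degree : ℝ) / n :=
        dTV_le_one_sub_of_le hc.2 hν.2 hasSum_countMeasure (countMeasure_mono hmc)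
          fun y => (hm y).trans (mul_le_of_le_one_left (hν.1 y) ht1)
    _ ≤ _ := by linarith [le_sum_degree_floorCount (t := t) (ν := ν) (L := L) hn]

/-- Lemma 4.7 (approximation step 2): approximation of `ν` by empirical-type measures
with prescribed colour and pair measures. -/
theorem approximation_step2 (𝒳 : Type) [Fintype 𝒳] [DecidableEq 𝒳]
    (ω : ℕ → 𝒳 → ℝ)
    (hωMn : ∀ n : ℕ, (∀ a, 0 ≤ ω n a) ∧ (∑ a, ω n a) = 1 ∧
      ∀ a, ∃ k : ℕ, (n : ℝ) * ω n a = (k : ℝ))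
    (ωl : 𝒳 → ℝ) (hωconv : ∀ a, Tendsto (fun n : ℕ => ω n a) atTop (𝓝 (ωl a)))
    (hωpos : ∀ a, 0 < ωl a)
    (ϖ : ℕ → 𝒳 → 𝒳 → ℝ)
    (hϖSn : ∀ n : ℕ, (∀ a b, 0 ≤ ϖ n a b) ∧ (∀ a b, ϖ n a b = ϖ n b a) ∧
      ∀ a b, ∃ k : ℕ, (n : ℝ) * ϖ n a b / (1 + if a = b then 1 else 0) = (k : ℝ))
    (ϖl : 𝒳 → 𝒳 → ℝ) (hϖconv : ∀ a b, Tendsto (fun n : ℕ => ϖ n a b) atTop (𝓝 (ϖl a b)))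
    (ν : (𝒳 × (𝒳 → ℕ)) → ℝ) (hν : IsPMF ν) (hmarg : marg ν = ωl)
    (hsub : SubConsistent ϖl ν) (ε : ℝ) (hε : 0 < ε) :
    ∃ N : ℕ, ∀ n ≥ N, ∃ νn : (𝒳 × (𝒳 → ℕ)) → ℝ, IsPMF νn ∧
      (∀ y, ∃ k : ℕ, (n : ℝ) * νn y = (k : ℝ)) ∧ marg νn = ω n ∧
      (∀ a b, pairOf νn a b = ϖ n a b) ∧ dTV νn ν ≤ ε := by
  set δ := min (ε / 4) 1
  have hδ0 : 0 < δ := lt_min (by linarith) one_pos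
  have hδε : δ ≤ ε / 4 := min_le_left _ _
  have hδ1 : δ ≤ 1 := min_le_right _ _
  obtain ⟨L, hL⟩ := hν.exists_finset_one_sub_le_sum hδ0
  have hω : ∀ a, ∀ᶠ n in atTop, (1 - δ) * marg ν a < ω n a := fun a =>
    (hωconv a).eventually_const_lt (by rw [hmarg]; nlinarith [hωpos a])
  have hϖ : ∀ a b, ∀ᶠ n in atTop, (1 - δ) * ϖl a b ≤ ϖ n a b := fun a b =>
    (hϖconv a b).eventually_mul_le (fun n => (hϖSn n).1 a b) (by linarith) (by linarith)
  have hC : ∀ᶠ n : ℕ in atTop, (Fintype.card 𝒳 * L.card : ℝ) / n ≤ ε / 2 :=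
    ((tendsto_const_div_atTop_nhds_zero_nat _).eventually_le_const (by linarith))
  obtain ⟨N, hN⟩ := eventually_atTop.1 ((eventually_all.2 hω).and
    ((eventually_all.2 fun a => eventually_all.2 (hϖ a)).and (hC.and (eventually_ne_atTop 0))))
  refine ⟨N, fun n hn => ?_⟩
  obtain ⟨hωn, hϖn, hCn, hn0⟩ := hN n hn
  obtain ⟨νn, hνn, hνnℕ, hνnω, hνnϖ, hνnd⟩ := exists_isPMF_marg_pairOf_eq_dTV_le hn0
    (hωMn n).2.1 (hωMn n).2.2 (fun a b => exists_natCast_eq_of_div_eq ((hϖSn n).2.2 a b))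
    hν (fun a b => ge_of_tendsto' (hϖconv a b) fun n => (hϖSn n).1 a b) hsub (by linarith)
    (by linarith) hωn hϖn L
  refine ⟨νn, hνn, hνnℕ, hνnω, hνnϖ, hνnd.trans ?_⟩
  nlinarith [mul_le_mul_of_nonneg_left hL (by linarith : (0 : ℝ) ≤ 1 - δ)]

end ColoredLDP
end

section
/- Let X be the colored random graph on n vertices with color law μ and symmetric connection probabilities p_n satisfying n·p_n(a,b) → C(a,b) for a symmetric C : 𝒳×𝒳 → [0,∞). Then the family of laws of (L¹,L²) is exponentially tight on M(𝒳) × M̃_*(𝒳×𝒳) (with the Euclidean topology): for every θ > 0 there exists a compact set K_θ ⊂ M(𝒳) × M̃_*(𝒳×𝒳) such that limsup_{n→∞} (1/n) log P( (L¹,L²) ∉ K_θ ) ≤ −θ. In particular, for every θ > 0 there exists N ∈ ℕ with limsup_{n→∞} (1/n) log P( |E| > nN ) ≤ −θ, where |E| is the number of edges of X. -/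
open Filter Topology

/-!
Given the colours, `|E|` is a sum of independent Bernoulli variables whose means sum to at most
`c n`, because `n p_n` is bounded. Hence `E[2^|E|] ≤ e^{cn}`, and Markov's inequality gives
`P(|E| > nN) ≤ e^{n(c - N log 2)}`, which is below `e^{-nθ}` for `N` large. The total mass of
`L²` is `2|E|/n`, so off this event `(L¹, L²)` lies in the compact set of probability vectors
paired with symmetric nonnegative matrices of total mass at most `2N`.
-/

open Finset Filter Topology

theorem Finset.sum_prod_ite_mem {ι R : Type*} [Fintype ι] [DecidableEq ι] [CommSemiring R]
    (f g : ι → R) : ∑ E : Finset ι, ∏ i, (if i ∈ E then f i else g i) = ∏ i, (f i + g i) := by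
  rw [Fintype.prod_add]
  refine sum_congr rfl fun E _ => ?_
  rw [prod_ite]
  congr 1 <;> congr 1 <;> ext <;> simp

lemma Filter.exists_eventually_forall_le_of_tendsto {ι : Type*} [Fintype ι] {f : ℕ → ι → ℝ}
    {g : ι → ℝ} (h : ∀ i, Tendsto (fun n => f n i) atTop (𝓝 (g i))) :
    ∃ c, 0 ≤ c ∧ ∀ᶠ n in atTop, ∀ i, f n i ≤ c := by
  refine ⟨∑ i, |g i| + 1, by positivity, eventually_all.2 fun i => ?_⟩
  have hgi : g i + 1 ≤ ∑ i, |g i| + 1 := add_le_add_left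
    ((le_abs_self _).trans (single_le_sum (fun j _ => abs_nonneg (g j)) (mem_univ i))) 1
  exact ((h i).eventually_le_const (lt_add_one (g i))).mono fun n hn => hn.trans hgi

namespace ColoredLDP

section RandomGraph

variable {𝒳 : Type} {n : ℕ} {μ : 𝒳 → ℝ} {p : 𝒳 → 𝒳 → ℝ}

lemma wt_nonneg (hμ0 : ∀ a, 0 ≤ μ a) (hp0 : ∀ a b, 0 ≤ p a b) (hp1 : ∀ a b, p a b ≤ 1)
    (x : Config 𝒳 n) : 0 ≤ wt μ p x := by
  refine mul_nonneg (prod_nonneg fun v _ => hμ0 _) (prod_nonneg fun e _ => ?_)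
  split_ifs
  · exact hp0 _ _
  · linarith [hp1 (x.1 e.1.1) (x.1 e.1.2)]

lemma sum_edge_le_of_mul_le {f : Edge n → ℝ} {c : ℝ} (hc0 : 0 ≤ c)
    (hf : ∀ e, (n : ℝ) * f e ≤ c) : ∑ e, f e ≤ n * c := by
  rcases n.eq_zero_or_pos with rfl | hn
  · simp [Finset.univ_eq_empty]
  have hn' : (0 : ℝ) < n := by exact_mod_cast hn
  have hcard : (Fintype.card (Edge n) : ℝ) ≤ n * n := by
    exact_mod_cast (Fintype.card_subtype_le _).trans_eq (by simp)
  calc ∑ e, f e ≤ ∑ _e : Edge n, c / n :=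
        sum_le_sum fun e _ => by rw [le_div_iff₀ hn', mul_comm]; exact hf e
    _ = Fintype.card (Edge n) * (c / n) := by rw [sum_const, card_univ, nsmul_eq_mul]
    _ ≤ n * n * (c / n) := by gcongr
    _ = n * c := by field_simp

variable [Fintype 𝒳]

/-- Given the colouring, the edges are independent Bernoulli variables, so the probability
generating function of the number of edges factorises over the potential edges. -/
lemma sum_wt_mul_pow_card (t : ℝ) :
    ∑ x : Config 𝒳 n, wt μ p x * t ^ x.2.card
      = ∑ σ : Fin n → 𝒳, (∏ v, μ (σ v)) * ∏ e : Edge n, (1 + (t - 1) * p (σ e.1.1) (σ e.1.2)) := by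
  rw [Fintype.sum_prod_type]
  refine sum_congr rfl fun σ _ => ?_
  have hpow : ∀ E : Finset (Edge n), t ^ E.card = ∏ e : Edge n, if e ∈ E then t else 1 := by
    intro E; rw [prod_ite_mem_eq, prod_const]
  simp only [wt, hpow, mul_assoc, ← mul_sum, ← prod_mul_distrib]
  congr 1
  calc _ = ∑ E : Finset (Edge n), ∏ e : Edge n,
          if e ∈ E then t * p (σ e.1.1) (σ e.1.2) else 1 - p (σ e.1.1) (σ e.1.2) :=
        sum_congr rfl fun E _ => prod_congr rfl fun e _ => by split_ifs <;> ring
    _ = _ := by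
        rw [Finset.sum_prod_ite_mem]
        exact prod_congr rfl fun e _ => by ring

lemma sum_wt_mul_two_pow_card_le (hμ0 : ∀ a, 0 ≤ μ a) (hμ1 : ∑ a, μ a = 1)
    (hp0 : ∀ a b, 0 ≤ p a b) {c : ℝ} (hc0 : 0 ≤ c) (hc : ∀ a b, (n : ℝ) * p a b ≤ c) :
    ∑ x : Config 𝒳 n, wt μ p x * 2 ^ x.2.card ≤ Real.exp (n * c) := by
  have hedges : ∀ σ : Fin n → 𝒳,
      ∏ e : Edge n, (1 + (2 - 1) * p (σ e.1.1) (σ e.1.2)) ≤ Real.exp (n * c) := fun σ =>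
    calc ∏ e : Edge n, (1 + (2 - 1) * p (σ e.1.1) (σ e.1.2))
        ≤ Real.exp (∑ e : Edge n, p (σ e.1.1) (σ e.1.2)) := by
          norm_num only [one_mul]; exact Real.prod_one_add_le_exp_sum _ fun e => hp0 _ _
      _ ≤ Real.exp (n * c) := Real.exp_le_exp.2 (sum_edge_le_of_mul_le hc0 fun e => hc _ _)
  calc ∑ x : Config 𝒳 n, wt μ p x * 2 ^ x.2.card
      ≤ ∑ σ : Fin n → 𝒳, (∏ v, μ (σ v)) * Real.exp (n * c) := by
        rw [sum_wt_mul_pow_card]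
        exact sum_le_sum fun σ _ =>
          mul_le_mul_of_nonneg_left (hedges σ) (prod_nonneg fun v _ => hμ0 _)
    _ = Real.exp (n * c) := by rw [← sum_mul, ← Fintype.sum_pow, hμ1, one_pow, one_mul]

variable [DecidableEq 𝒳]

lemma graphP_mono (hμ0 : ∀ a, 0 ≤ μ a) (hp0 : ∀ a b, 0 ≤ p a b) (hp1 : ∀ a b, p a b ≤ 1)
    {A B : Set (Config 𝒳 n)} (hAB : A ⊆ B) : graphP 𝒳 n μ p A ≤ graphP 𝒳 n μ p B :=
  sum_le_sum fun x _ => Set.indicator_le_indicator_of_subset hAB (wt_nonneg hμ0 hp0 hp1) x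

/-- Chernoff bound: Markov's inequality applied to `2 ^ |E|`. -/
lemma graphP_card_gt_le (hμ0 : ∀ a, 0 ≤ μ a) (hμ1 : ∑ a, μ a = 1)
    (hp0 : ∀ a b, 0 ≤ p a b) (hp1 : ∀ a b, p a b ≤ 1) {c : ℝ} (hc0 : 0 ≤ c)
    (hc : ∀ a b, (n : ℝ) * p a b ≤ c) (k : ℕ) :
    graphP 𝒳 n μ p {x | (k : ℝ) < x.2.card} ≤ Real.exp (n * c - k * Real.log 2) := by
  have hmarkov : ∀ x : Config 𝒳 n,
      {x : Config 𝒳 n | (k : ℝ) < x.2.card}.indicator (wt μ p) x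
        ≤ wt μ p x * 2 ^ x.2.card / 2 ^ k := by
    intro x
    have hw := wt_nonneg hμ0 hp0 hp1 x
    by_cases hx : x ∈ {x : Config 𝒳 n | (k : ℝ) < x.2.card}
    · rw [Set.indicator_of_mem hx, le_div_iff₀ (by positivity)]
      exact mul_le_mul_of_nonneg_left
        (pow_le_pow_right₀ one_le_two (by exact_mod_cast (show (k : ℝ) < x.2.card from hx).le)) hw
    · rw [Set.indicator_of_notMem hx]
      positivity
  calc graphP 𝒳 n μ p {x | (k : ℝ) < x.2.card}
      ≤ (∑ x : Config 𝒳 n, wt μ p x * 2 ^ x.2.card) / 2 ^ k := by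
        rw [sum_div]; exact sum_le_sum fun x _ => hmarkov x
    _ ≤ Real.exp (n * c) / 2 ^ k := by
        gcongr; exact sum_wt_mul_two_pow_card_le hμ0 hμ1 hp0 hc0 hc
    _ = Real.exp (n * c - k * Real.log 2) := by
        rw [Real.exp_sub, Real.exp_nat_mul (Real.log 2), Real.exp_log two_pos]

end RandomGraph

lemma exists_eventually_graphP_card_gt_le {𝒳 : Type} [Fintype 𝒳] [DecidableEq 𝒳] {μ : 𝒳 → ℝ}
    (hμ0 : ∀ a, 0 ≤ μ a) (hμ1 : ∑ a, μ a = 1) {p : ℕ → 𝒳 → 𝒳 → ℝ}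
    (hp0 : ∀ n a b, 0 ≤ p n a b) (hp1 : ∀ n a b, p n a b ≤ 1) {c : ℝ} (hc0 : 0 ≤ c)
    (hc : ∀ᶠ n : ℕ in atTop, ∀ a b, (n : ℝ) * p n a b ≤ c) (θ : ℝ) :
    ∃ N : ℕ, ∀ᶠ n : ℕ in atTop,
      graphP 𝒳 n μ (p n) {x | (n : ℝ) * N < x.2.card} ≤ Real.exp (n * -θ) := by
  obtain ⟨N, hN⟩ : ∃ N : ℕ, c + θ ≤ N * Real.log 2 :=
    ⟨⌈(c + θ) / Real.log 2⌉₊, (div_le_iff₀ (Real.log_pos one_lt_two)).1 (Nat.le_ceil _)⟩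
  refine ⟨N, hc.mono fun n hn => ?_⟩
  calc graphP 𝒳 n μ (p n) {x | (n : ℝ) * N < x.2.card}
      ≤ Real.exp (n * c - (n * N : ℕ) * Real.log 2) := by
        simpa only [Nat.cast_mul] using
          graphP_card_gt_le hμ0 hμ1 (hp0 n) (hp1 n) hc0 hn (n * N)
    _ ≤ Real.exp (n * -θ) := by
        gcongr
        push_cast
        nlinarith [(Nat.cast_nonneg n : (0 : ℝ) ≤ n)]

lemma elog_le_coe_of_le_exp {x r : ℝ} (h : x ≤ Real.exp r) : elog x ≤ r := by
  unfold elog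
  split_ifs with hx
  · exact bot_le
  · exact EReal.coe_le_coe_iff.2 <| (Real.log_le_log (not_le.1 hx) h).trans_eq (Real.log_exp r)

lemma limsup_inv_mul_elog_le {u : ℕ → ℝ} {θ : ℝ}
    (h : ∀ᶠ n : ℕ in atTop, u n ≤ Real.exp (n * -θ)) :
    limsup (fun n : ℕ => (((n : ℝ)⁻¹ : ℝ) : EReal) * elog (u n)) atTop ≤ ((-θ : ℝ) : EReal) := by
  refine limsup_le_of_le (by isBoundedDefault) ?_
  filter_upwards [h, eventually_gt_atTop 0] with n hn hpos
  have hn' : (0 : ℝ) < n := by exact_mod_cast hpos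
  calc (((n : ℝ)⁻¹ : ℝ) : EReal) * elog (u n)
      ≤ (((n : ℝ)⁻¹ : ℝ) : EReal) * ((n * -θ : ℝ) : EReal) :=
        mul_le_mul_of_nonneg_left (elog_le_coe_of_le_exp hn)
          (EReal.coe_nonneg.2 (inv_nonneg.2 hn'.le))
    _ = ((-θ : ℝ) : EReal) := by
        rw [← EReal.coe_mul, inv_mul_cancel_left₀ hn'.ne']

def boundedMassSet (𝒳 : Type) [Fintype 𝒳] (m : ℝ) : Set ((𝒳 → ℝ) × (𝒳 → 𝒳 → ℝ)) :=
  {z | ((∀ a, 0 ≤ z.1 a) ∧ ∑ a, z.1 a = 1) ∧ (∀ a b, 0 ≤ z.2 a b) ∧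
    (∀ a b, z.2 a b = z.2 b a) ∧ ∑ a, ∑ b, z.2 a b ≤ m}

lemma isCompact_boundedMassSet (𝒳 : Type) [Fintype 𝒳] (m : ℝ) :
    IsCompact (boundedMassSet 𝒳 m) := by
  have hclosed : IsClosed (boundedMassSet 𝒳 m) := by
    simp only [boundedMassSet, Set.ofPred_and, Set.ofPred_forall]
    refine ((isClosed_iInter fun a => isClosed_le ?_ ?_).inter (isClosed_eq ?_ ?_)).inter
      ((isClosed_iInter fun a => isClosed_iInter fun b => isClosed_le ?_ ?_).inter
      ((isClosed_iInter fun a => isClosed_iInter fun b => isClosed_eq ?_ ?_).inter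
      (isClosed_le ?_ ?_))) <;> fun_prop
  refine (isCompact_Icc (a := (0, 0)) (b := (1, fun _ _ => m))).of_isClosed_subset hclosed ?_
  rintro z ⟨⟨h1, hsum1⟩, h2, -, hsum2⟩
  refine ⟨⟨h1, h2⟩, fun a => ?_, fun a b => ?_⟩
  · exact (single_le_sum (fun a _ => h1 a) (mem_univ a)).trans hsum1.le
  · calc z.2 a b ≤ ∑ b, z.2 a b := single_le_sum (fun b _ => h2 a b) (mem_univ b)
      _ ≤ ∑ a, ∑ b, z.2 a b := single_le_sum (fun a _ => sum_nonneg fun b _ => h2 a b) (mem_univ a)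
      _ ≤ m := hsum2

section Empirical

variable {𝒳 : Type} [DecidableEq 𝒳] {n : ℕ}

lemma empColor_nonneg (x : Config 𝒳 n) (a : 𝒳) : 0 ≤ empColor x a := by
  unfold empColor; positivity

lemma sum_empColor [Fintype 𝒳] (hn : 0 < n) (x : Config 𝒳 n) : ∑ a, empColor x a = 1 := by
  have hfibres : ∑ a, #{v | x.1 v = a} = n := by
    rw [← card_eq_sum_card_fiberwise (fun v _ => mem_univ (x.1 v)), card_univ, Fintype.card_fin]
  simp only [empColor, ← sum_div, ← Nat.cast_sum, hfibres]
  exact div_self (Nat.cast_ne_zero.2 hn.ne')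

lemma empPair_nonneg (x : Config 𝒳 n) (a b : 𝒳) : 0 ≤ empPair x a b := by
  unfold empPair; positivity

lemma empPair_comm (x : Config 𝒳 n) (a b : 𝒳) : empPair x a b = empPair x b a := by
  unfold empPair
  congr 1
  refine sum_congr rfl fun e _ => ?_
  rw [add_comm]
  congr 1 <;> exact if_congr and_comm rfl rfl

lemma sum_empPair [Fintype 𝒳] (x : Config 𝒳 n) :
    ∑ a, ∑ b, empPair x a b = 2 * x.2.card / n := by
  simp only [empPair, ← sum_div]
  rw [sum_congr rfl fun a _ => sum_comm, sum_comm]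
  simp only [ite_and, sum_add_distrib, sum_ite_irrel, sum_ite_eq, mem_univ, ↓reduceIte,
    sum_const_zero, sum_const, nsmul_eq_mul, mul_one]
  ring

lemma mem_boundedMassSet_of_card_le [Fintype 𝒳] (hn : 0 < n) (x : Config 𝒳 n) {m : ℝ}
    (h : (x.2.card : ℝ) ≤ n * m) : (empColor x, empPair x) ∈ boundedMassSet 𝒳 (2 * m) := by
  refine ⟨⟨empColor_nonneg x, sum_empColor hn x⟩, empPair_nonneg x, empPair_comm x, ?_⟩
  rw [sum_empPair, div_le_iff₀ (Nat.cast_pos.2 hn)]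
  linarith

end Empirical

theorem exponential_tightness_general (𝒳 : Type) [Fintype 𝒳] [DecidableEq 𝒳]
    (μ : 𝒳 → ℝ) (hμ0 : ∀ a, 0 ≤ μ a) (hμ1 : ∑ a, μ a = 1)
    (p : ℕ → 𝒳 → 𝒳 → ℝ) (hp0 : ∀ n a b, 0 ≤ p n a b) (hp1 : ∀ n a b, p n a b ≤ 1)
    (C : 𝒳 → 𝒳 → ℝ)
    (hlim : ∀ a b, Tendsto (fun n : ℕ => (n : ℝ) * p n a b) atTop (𝓝 (C a b)))
 :
    (∀ θ : ℝ, 0 < θ → ∃ K : Set ((𝒳 → ℝ) × (𝒳 → 𝒳 → ℝ)), IsCompact K ∧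
      (∀ z ∈ K, ((∀ a, 0 ≤ z.1 a) ∧ (∑ a, z.1 a) = 1) ∧
        (∀ a b, 0 ≤ z.2 a b) ∧ (∀ a b, z.2 a b = z.2 b a)) ∧
      limsup (fun n : ℕ => (((n : ℝ)⁻¹ : ℝ) : EReal) *
          elog (graphP 𝒳 n μ (p n) {x | (empColor x, empPair x) ∉ K})) atTop ≤
        ((-θ : ℝ) : EReal)) ∧
    (∀ θ : ℝ, 0 < θ → ∃ N : ℕ,
      limsup (fun n : ℕ => (((n : ℝ)⁻¹ : ℝ) : EReal) *
          elog (graphP 𝒳 n μ (p n) {x | (n : ℝ) * (N : ℝ) < (x.2.card : ℝ)})) atTop ≤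
        ((-θ : ℝ) : EReal)) := by
  obtain ⟨c, hc0, hc⟩ := exists_eventually_forall_le_of_tendsto
    (f := fun n (q : 𝒳 × 𝒳) => (n : ℝ) * p n q.1 q.2) fun q => hlim q.1 q.2
  have hedges := exists_eventually_graphP_card_gt_le hμ0 hμ1 hp0 hp1 hc0
    (hc.mono fun n hn a b => hn (a, b))
  refine ⟨fun θ _ => ?_, fun θ _ => ?_⟩
  · obtain ⟨N, hN⟩ := hedges θ
    refine ⟨boundedMassSet 𝒳 (2 * N), isCompact_boundedMassSet 𝒳 _,
      fun z hz => ⟨hz.1, hz.2.1, hz.2.2.1⟩, limsup_inv_mul_elog_le ?_⟩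
    filter_upwards [hN, eventually_gt_atTop 0] with n hn hpos
    refine (graphP_mono hμ0 (hp0 n) (hp1 n) fun x hx => ?_).trans hn
    by_contra hle
    exact hx (mem_boundedMassSet_of_card_le hpos x (not_lt.1 hle))
  · obtain ⟨N, hN⟩ := hedges θ
    exact ⟨N, limsup_inv_mul_elog_le hN⟩

/-- Lemma 5.1: exponential tightness of the laws of `(L¹, L²)`. -/
theorem exponential_tightness (𝒳 : Type) [Fintype 𝒳] [DecidableEq 𝒳]
    (μ : 𝒳 → ℝ) (hμ0 : ∀ a, 0 ≤ μ a) (hμ1 : ∑ a, μ a = 1)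
    (p : ℕ → 𝒳 → 𝒳 → ℝ) (hp0 : ∀ n a b, 0 ≤ p n a b) (hp1 : ∀ n a b, p n a b ≤ 1)
    (hpsym : ∀ n a b, p n a b = p n b a)
    (C : 𝒳 → 𝒳 → ℝ) (hC0 : ∀ a b, 0 ≤ C a b) (hCsym : ∀ a b, C a b = C b a)
    (hlim : ∀ a b, Tendsto (fun n : ℕ => (n : ℝ) * p n a b) atTop (𝓝 (C a b)))
 :
    (∀ θ : ℝ, 0 < θ → ∃ K : Set ((𝒳 → ℝ) × (𝒳 → 𝒳 → ℝ)), IsCompact K ∧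
      (∀ z ∈ K, ((∀ a, 0 ≤ z.1 a) ∧ (∑ a, z.1 a) = 1) ∧
        (∀ a b, 0 ≤ z.2 a b) ∧ (∀ a b, z.2 a b = z.2 b a)) ∧
      limsup (fun n : ℕ => (((n : ℝ)⁻¹ : ℝ) : EReal) *
          elog (graphP 𝒳 n μ (p n) {x | (empColor x, empPair x) ∉ K})) atTop ≤
        ((-θ : ℝ) : EReal)) ∧
    (∀ θ : ℝ, 0 < θ → ∃ N : ℕ,
      limsup (fun n : ℕ => (((n : ℝ)⁻¹ : ℝ) : EReal) *
          elog (graphP 𝒳 n μ (p n) {x | (n : ℝ) * (N : ℝ) < (x.2.card : ℝ)})) atTop ≤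
        ((-θ : ℝ) : EReal)) :=
  exponential_tightness_general 𝒳 μ hμ0 hμ1 p hp0 hp1 C hlim

end ColoredLDP
end

section
/- Let 𝒳 be a finite set. The function J̃, defined on M(𝒳) × M̃_*(𝒳×𝒳) × M(𝒳×ℕ^𝒳) (probability measures on 𝒳 and finite symmetric measures on 𝒳×𝒳 with the Euclidean topology, probability measures on the countable discrete set 𝒳×ℕ^𝒳 with the topology of weak convergence) by J̃((ω,ϖ),ν) = H(ν‖Q[ϖ,ν]) if (ϖ,ν) is sub-consistent and ν₁ = ω, and J̃((ω,ϖ),ν) = ∞ otherwise, is lower semicontinuous as a map into [0,∞]. -/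
/-!
`J̃` is `⊤` off a closed set, on which it equals `H(ν‖Q[ϖ,ω])`. Relative entropy is a supremum of
continuous functions of the two measures, hence lower semicontinuous, and `Q[ϖ,ω]` depends
continuously on `(ϖ, ω)`.
-/

open Filter Topology

namespace ColoredLDP

open Real MeasureTheory ProbabilityTheory
open scoped ENNReal NNReal

section RelativeEntropy

variable {Y : Type}

lemma mul_one_add_sub_mul_exp_le_mul_log_div {p q s : ℝ} (hp : 0 ≤ p) (hq : 0 ≤ q)
    (hac : q = 0 → p = 0) : p * (1 + s) - q * exp s ≤ p * log (p / q) := by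
  rcases hp.eq_or_lt with rfl | hp
  · simp only [zero_mul, zero_sub, neg_nonpos]
    positivity
  have hq : 0 < q := hq.lt_of_ne fun h => hp.ne' (hac h.symm)
  have h := add_one_le_exp (s - log (p / q))
  rw [exp_sub, exp_log (div_pos hp hq)] at h
  have : p * (s - log (p / q) + 1) ≤ q * exp s :=
    calc p * (s - log (p / q) + 1) ≤ p * (exp s / (p / q)) := by gcongr
      _ = q * exp s := by field_simp
  linarith

lemma le_mul_log_div_add {p q : ℝ} (hp : 0 ≤ p) (hq : 0 ≤ q) (hac : q = 0 → p = 0) :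
    p ≤ p * log (p / q) + q := by
  have := mul_one_add_sub_mul_exp_le_mul_log_div (s := 0) hp hq hac
  rw [add_zero, mul_one, exp_zero, mul_one] at this
  linarith

/-- Since `p s - q (e ^ s - 1) ≤ p log (p / q) + q - p`, with equality at `s = log (p / q)`, the
relative entropy of `ν` with respect to a probability vector `ρ` is the supremum of these. -/
noncomputable def relEntBound (F : Finset Y) (s : Y → ℝ) (ν ρ : Y → ℝ) : ℝ :=
  ∑ y ∈ F, (ν y * (1 + s y) - ρ y * (exp (s y) - 1)) - 1

variable {ν ρ : Y → ℝ}

lemma relEntBound_le_relEntC (hν : ∀ y, 0 ≤ ν y) (hρ : ∀ y, 0 ≤ ρ y) (hρ1 : HasSum ρ 1)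
    (F : Finset Y) (s : Y → ℝ) : (relEntBound F s ν ρ : EReal) ≤ relEntC ν ρ := by
  unfold relEntC
  split_ifs with h
  · obtain ⟨hac, hg⟩ := h
    rw [EReal.coe_le_coe_iff]
    have hterm : ∀ y s, ν y * (1 + s) - ρ y * (exp s - 1) ≤ ν y * log (ν y / ρ y) + ρ y :=
      fun y s => by linarith [mul_one_add_sub_mul_exp_le_mul_log_div (s := s) (hν y) (hρ y) (hac y)]
    have hnonneg : ∀ y, 0 ≤ ν y * log (ν y / ρ y) + ρ y := fun y =>
      (hν y).trans (le_mul_log_div_add (hν y) (hρ y) (hac y))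
    calc relEntBound F s ν ρ ≤ ∑ y ∈ F, (ν y * log (ν y / ρ y) + ρ y) - 1 := by
          unfold relEntBound
          gcongr with y
          exact hterm y (s y)
      _ ≤ ∑' y, (ν y * log (ν y / ρ y) + ρ y) - 1 := by
          gcongr
          exact (hg.add hρ1.summable).sum_le_tsum F fun y _ => hnonneg y
      _ = ∑' y, ν y * log (ν y / ρ y) := by
          rw [hg.tsum_add hρ1.summable, hρ1.tsum_eq]
          ring
  · exact le_top

lemma sum_sub_le_relEntBound (hν : ∀ y, 0 ≤ ν y) (hρ : ∀ y, 0 ≤ ρ y)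
    (hac : ∀ y, ρ y = 0 → ν y = 0) {δ : ℝ} (hδ : 0 < δ) (F : Finset Y) :
    ∑ y ∈ F, (ν y * log (ν y / ρ y) + ρ y) - δ * ∑ y ∈ F, ρ y - 1 ≤
      relEntBound F (fun y => if ν y = 0 then log δ else log (ν y / ρ y)) ν ρ := by
  unfold relEntBound
  rw [Finset.mul_sum, ← Finset.sum_sub_distrib]
  refine sub_le_sub_right (Finset.sum_le_sum fun y _ => ?_) 1
  dsimp only
  split_ifs with hy
  · rw [hy, exp_log hδ]
    linarith
  · have hρy : 0 < ρ y := (hρ y).lt_of_ne fun h => hy (hac y h.symm)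
    rw [exp_log (div_pos ((hν y).lt_of_ne' hy) hρy)]
    field_simp
    nlinarith [mul_nonneg hδ.le hρy.le]

lemma exists_lt_relEntBound (hν : ∀ y, 0 ≤ ν y) (hρ : ∀ y, 0 ≤ ρ y) (hρ1 : HasSum ρ 1)
    {c : ℝ} (hc : (c : EReal) < relEntC ν ρ) : ∃ F s, c < relEntBound F s ν ρ := by
  by_cases hac : ∀ y, ρ y = 0 → ν y = 0
  swap
  · push Not at hac
    obtain ⟨y, hρy, hνy⟩ := hac
    have hpos := (hν y).lt_of_ne' hνy
    refine ⟨{y}, fun _ => (c + 1) / ν y, ?_⟩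
    simp only [relEntBound, Finset.sum_singleton, hρy, zero_mul, sub_zero]
    field_simp
    linarith
  set g := fun y => ν y * log (ν y / ρ y) + ρ y
  -- `g ≥ 0` and `∑' g = relEntC ν ρ + 1`, whether the latter is finite or not.
  have key : ∃ δ > 0, ∃ F : Finset Y, c + δ + 1 < ∑ y ∈ F, g y := by
    by_cases hs : Summable fun y => ν y * log (ν y / ρ y)
    · rw [relEntC, if_pos ⟨hac, hs⟩, EReal.coe_lt_coe_iff] at hc
      refine ⟨(∑' y, ν y * log (ν y / ρ y) - c) / 2, by linarith, ?_⟩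
      exact ((hs.hasSum.add hρ1).eventually (eventually_gt_nhds (by linarith))).exists
    · refine ⟨1, one_pos, ?_⟩
      by_contra! hbdd
      refine hs ((summable_of_sum_le (fun y => ?_) hbdd).sub hρ1.summable |>.congr fun y => ?_)
      · exact (hν y).trans (le_mul_log_div_add (hν y) (hρ y) (hac y))
      · simp [g]
  obtain ⟨δ, hδ, F, hF⟩ := key
  refine ⟨F, _, lt_of_lt_of_le ?_ (sum_sub_le_relEntBound hν hρ hac hδ F)⟩
  nlinarith [sum_le_hasSum F (fun y _ => hρ y) hρ1]

lemma relEntC_eq_iSup_relEntBound (hν : ∀ y, 0 ≤ ν y) (hρ : ∀ y, 0 ≤ ρ y) (hρ1 : HasSum ρ 1) :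
    relEntC ν ρ = ⨆ p : Finset Y × (Y → ℝ), (relEntBound p.1 p.2 ν ρ : EReal) := by
  refine le_antisymm (le_of_forall_lt fun c hc => ?_)
    (iSup_le fun p => relEntBound_le_relEntC hν hρ hρ1 p.1 p.2)
  obtain ⟨r, hcr, hr⟩ := EReal.exists_between_coe_real hc
  obtain ⟨F, s, h⟩ := exists_lt_relEntBound hν hρ hρ1 hr
  exact hcr.trans ((EReal.coe_lt_coe_iff.2 h).trans_le
    (le_iSup (fun p : Finset Y × (Y → ℝ) => (relEntBound p.1 p.2 ν ρ : EReal)) (F, s)))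

lemma lowerSemicontinuous_relEntC {X : Type*} [TopologicalSpace X] {ν ρ : X → Y → ℝ}
    (hνc : ∀ y, Continuous fun x => ν x y) (hρc : ∀ y, Continuous fun x => ρ x y)
    (hν : ∀ x y, 0 ≤ ν x y) (hρ : ∀ x y, 0 ≤ ρ x y) (hρ1 : ∀ x, HasSum (ρ x) 1) :
    LowerSemicontinuous fun x => relEntC (ν x) (ρ x) := by
  simp_rw [relEntC_eq_iSup_relEntBound (hν _) (hρ _) (hρ1 _)]
  refine lowerSemicontinuous_iSup fun p => (continuous_coe_real_ereal.comp ?_).lowerSemicontinuous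
  unfold relEntBound
  fun_prop

end RelativeEntropy

lemma hasSum_measureReal_singleton {α : Type*} [MeasurableSpace α] [Countable α]
    [MeasurableSingletonClass α] (μ : Measure α) [IsFiniteMeasure μ] :
    HasSum (fun x => μ.real {x}) (μ.real Set.univ) := by
  have h := μ.tsum_indicator_apply_singleton Set.univ MeasurableSet.univ
  simp only [Set.indicator_univ] at h
  have := ENNReal.hasSum_toReal (h ▸ measure_ne_top μ Set.univ)
  rwa [← ENNReal.tsum_toReal_eq fun x => measure_ne_top μ _, h] at this

lemma hasSum_prod_poisson {ι : Type*} [Fintype ι] (r : ι → ℝ≥0) :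
    HasSum (fun ℓ : ι → ℕ => ∏ i, exp (-r i) * r i ^ ℓ i / (ℓ i).factorial) 1 := by
  have h := hasSum_measureReal_singleton (Measure.pi fun i => poissonMeasure (r i))
  simp only [measureReal_def, Measure.pi_singleton, ENNReal.toReal_prod] at h
  simpa only [← measureReal_def, poissonMeasure_real_singleton, measure_univ,
    ENNReal.toReal_one] using h

section Qof

variable {𝒳 : Type} [Fintype 𝒳] {ϖ : 𝒳 → 𝒳 → ℝ} {ω : 𝒳 → ℝ}

lemma hasSum_Qof_fiber (hϖ : ∀ a b, 0 ≤ ϖ a b) (hω : ∀ a, 0 ≤ ω a) (a : 𝒳) :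
    HasSum (fun ℓ => Qof ϖ ω (a, ℓ)) (ω a) := by
  have h := (hasSum_prod_poisson fun b => (ϖ a b / ω a).toNNReal).mul_left (ω a)
  simp only [Real.coe_toNNReal _ (div_nonneg (hϖ a _) (hω a)), mul_one] at h
  exact h

lemma Qof_nonneg (hϖ : ∀ a b, 0 ≤ ϖ a b) (hω : ∀ a, 0 ≤ ω a) (x : 𝒳 × (𝒳 → ℕ)) :
    0 ≤ Qof ϖ ω x :=
  mul_nonneg (hω _) (Finset.prod_nonneg fun b _ => by
    have := div_nonneg (hϖ x.1 b) (hω x.1)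
    positivity)

lemma Qof_le (hϖ : ∀ a b, 0 ≤ ϖ a b) (hω : ∀ a, 0 ≤ ω a) (x : 𝒳 × (𝒳 → ℕ)) :
    Qof ϖ ω x ≤ ω x.1 :=
  le_hasSum (hasSum_Qof_fiber hϖ hω x.1) x.2 fun _ _ => Qof_nonneg hϖ hω _

lemma hasSum_Qof (hϖ : ∀ a b, 0 ≤ ϖ a b) (hω : ∀ a, 0 ≤ ω a) :
    HasSum (Qof ϖ ω) (∑ a, ω a) := by
  have hs : Summable (Qof ϖ ω) := (summable_prod_of_nonneg (Qof_nonneg hϖ hω)).2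
    ⟨fun a => (hasSum_Qof_fiber hϖ hω a).summable, Summable.of_finite⟩
  convert hs.hasSum
  rw [hs.tsum_prod, tsum_fintype]
  exact Finset.sum_congr rfl fun a _ => (hasSum_Qof_fiber hϖ hω a).tsum_eq.symm

/-- Where `ω a = 0` the rates `ϖ a b / ω a` blow up, but `Q` is squeezed between `0` and `ω a`. -/
lemma continuousOn_Qof_apply (x : 𝒳 × (𝒳 → ℕ)) :
    ContinuousOn (fun p : (𝒳 → 𝒳 → ℝ) × (𝒳 → ℝ) => Qof p.1 p.2 x)
      {p | (∀ a b, 0 ≤ p.1 a b) ∧ ∀ a, 0 ≤ p.2 a} := by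
  intro p₀ _
  by_cases h : p₀.2 x.1 = 0
  · have hlim : Tendsto (fun p : (𝒳 → 𝒳 → ℝ) × (𝒳 → ℝ) => p.2 x.1) (𝓝 p₀) (𝓝 0) :=
      h ▸ (by fun_prop : Continuous fun p : (𝒳 → 𝒳 → ℝ) × (𝒳 → ℝ) => p.2 x.1).tendsto p₀
    rw [ContinuousWithinAt, show Qof p₀.1 p₀.2 x = 0 by simp [Qof, h]]
    refine squeeze_zero' ?_ ?_ (hlim.mono_left nhdsWithin_le_nhds)
    · filter_upwards [self_mem_nhdsWithin] with p hp using Qof_nonneg hp.1 hp.2 x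
    · filter_upwards [self_mem_nhdsWithin] with p hp using Qof_le hp.1 hp.2 x
  · refine ContinuousAt.continuousWithinAt ?_
    unfold Qof
    have hdiv : ∀ b, ContinuousAt (fun p : (𝒳 → 𝒳 → ℝ) × (𝒳 → ℝ) => p.1 x.1 b / p.2 x.1) p₀ :=
      fun b => ContinuousAt.div (by fun_prop) (by fun_prop) h
    fun_prop (disch := assumption)

end Qof

section Constraints

lemma LowerSemicontinuous.isClosed_setOf_le {α γ : Type*} [TopologicalSpace α] [LinearOrder γ]
    [TopologicalSpace γ] [OrderTopology γ] {f g : α → γ} (hf : LowerSemicontinuous f)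
    (hg : Continuous g) : IsClosed {x | f x ≤ g x} :=
  hf.isClosed_epigraph.preimage (continuous_id.prodMk hg)

variable {𝒳 : Type}

lemma isClosed_setOf_subConsistent :
    IsClosed {p : (𝒳 → 𝒳 → ℝ) × (𝒳 × (𝒳 → ℕ) → ℝ) | SubConsistent p.1 p.2} := by
  simp only [SubConsistent, Set.ofPred_forall]
  refine isClosed_iInter fun a => isClosed_iInter fun b => ?_
  refine LowerSemicontinuous.isClosed_setOf_le (lowerSemicontinuous_tsum fun ℓ => ?_) ?_
  · exact (ENNReal.continuous_ofReal.comp (by fun_prop)).lowerSemicontinuous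
  · exact ENNReal.continuous_ofReal.comp (by fun_prop)

lemma ofReal_marg {ν : 𝒳 × (𝒳 → ℕ) → ℝ} (hν : IsPMF ν) (a : 𝒳) :
    ENNReal.ofReal (marg ν a) = ∑' ℓ, ENNReal.ofReal (ν (a, ℓ)) :=
  ENNReal.ofReal_tsum_of_nonneg (fun _ => hν.1 _) (hν.2.summable.prod_factor a)

variable [Fintype 𝒳]

lemma sum_marg {ν : 𝒳 × (𝒳 → ℕ) → ℝ} {s : ℝ} (hν : HasSum ν s) : ∑ a, marg ν a = s := by
  rw [← hν.tsum_eq, hν.summable.tsum_prod, tsum_fintype]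
  rfl

/-- Mass can escape to infinity in the pointwise limit, so only `marg ν ≤ ω` is a closed
condition; equality follows because both sides have total mass one. -/
lemma isClosed_setOf_marg_eq :
    IsClosed {p : {ω : 𝒳 → ℝ // (∀ a, 0 ≤ ω a) ∧ (∑ a, ω a) = 1} × {ν // IsPMF ν} |
      marg p.2.1 = p.1.1} := by
  have hset : {p : {ω : 𝒳 → ℝ // (∀ a, 0 ≤ ω a) ∧ (∑ a, ω a) = 1} × {ν // IsPMF ν} |
      marg p.2.1 = p.1.1} =
      ⋂ a, {p | ENNReal.ofReal (marg p.2.1 a) ≤ ENNReal.ofReal (p.1.1 a)} := by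
    ext ⟨⟨ω, hω, hω1⟩, ⟨ν, hν⟩⟩
    simp only [Set.mem_ofPred_eq, Set.mem_iInter, ENNReal.ofReal_le_ofReal_iff (hω _)]
    refine ⟨fun h a => h ▸ le_rfl, fun h => funext fun a => ?_⟩
    refine (Finset.sum_eq_sum_iff_of_le fun a _ => h a).1 ?_ a (Finset.mem_univ a)
    rw [sum_marg hν.2, hω1]
  rw [hset]
  refine isClosed_iInter fun a => LowerSemicontinuous.isClosed_setOf_le ?_ ?_
  · simp_rw [fun p : {ω : 𝒳 → ℝ // (∀ a, 0 ≤ ω a) ∧ (∑ a, ω a) = 1} × {ν // IsPMF ν} =>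
      ofReal_marg p.2.2 a]
    exact lowerSemicontinuous_tsum fun ℓ => (ENNReal.continuous_ofReal.comp
      ((continuous_apply (a, ℓ)).comp (by fun_prop))).lowerSemicontinuous
  · exact ENNReal.continuous_ofReal.comp ((continuous_apply a).comp (by fun_prop))

end Constraints

lemma lowerSemicontinuous_of_eqOn_of_eq_top {α β : Type*} [TopologicalSpace α] [Preorder β]
    [OrderTop β] {f g : α → β} {s : Set α} (hs : IsClosed s) (hg : LowerSemicontinuous g)
    (hfg : Set.EqOn f g s) (hf : ∀ x ∉ s, f x = ⊤) : LowerSemicontinuous f := by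
  intro x y hy
  by_cases hx : x ∈ s
  · rw [hfg hx] at hy
    filter_upwards [hg x y hy] with x' hx'
    by_cases hx's : x' ∈ s
    · rwa [hfg hx's]
    · rw [hf x' hx's]
      exact hx'.trans_le le_top
  · filter_upwards [hs.isOpen_compl.mem_nhds hx] with x' hx'
    rwa [hf x' hx', ← hf x hx]

abbrev ParamSpace (𝒳 : Type) [Fintype 𝒳] :=
  {ω : 𝒳 → ℝ // (∀ a, 0 ≤ ω a) ∧ (∑ a, ω a) = 1} ×
    {ϖ : 𝒳 → 𝒳 → ℝ // (∀ a b, 0 ≤ ϖ a b) ∧ ∀ a b, ϖ a b = ϖ b a} ×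
    {ν : 𝒳 × (𝒳 → ℕ) → ℝ // IsPMF ν}

variable {𝒳 : Type} [Fintype 𝒳]

lemma isClosed_setOf_subConsistent_and_marg_eq :
    IsClosed {z : ParamSpace 𝒳 | SubConsistent z.2.1.1 z.2.2.1 ∧ marg z.2.2.1 = z.1.1} :=
  (isClosed_setOf_subConsistent.preimage
      (by fun_prop : Continuous fun z : ParamSpace 𝒳 => (z.2.1.1, z.2.2.1))).inter
    (isClosed_setOf_marg_eq.preimage (by fun_prop : Continuous fun z : ParamSpace 𝒳 => (z.1, z.2.2)))

lemma lowerSemicontinuous_relEntC_Qof :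
    LowerSemicontinuous fun z : ParamSpace 𝒳 => relEntC z.2.2.1 (Qof z.2.1.1 z.1.1) :=
  lowerSemicontinuous_relEntC (fun y => (continuous_apply y).comp (by fun_prop))
    (fun x => (continuousOn_Qof_apply x).comp_continuous
      (by fun_prop : Continuous fun z : ParamSpace 𝒳 => (z.2.1.1, z.1.1))
      fun z => ⟨z.2.1.2.1, z.1.2.1⟩)
    (fun z => z.2.2.2.1) (fun z => Qof_nonneg z.2.1.2.1 z.1.2.1)
    (fun z => by simpa only [z.1.2.2] using hasSum_Qof z.2.1.2.1 z.1.2.1)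

open Classical in
theorem Jtilde_lsc_general (𝒳 : Type) [Fintype 𝒳] :
    LowerSemicontinuous
      (fun z : {ωz : 𝒳 → ℝ // (∀ a, 0 ≤ ωz a) ∧ (∑ a, ωz a) = 1} ×
          {ϖz : 𝒳 → 𝒳 → ℝ // (∀ a b, 0 ≤ ϖz a b) ∧ ∀ a b, ϖz a b = ϖz b a} ×
          {νz : (𝒳 × (𝒳 → ℕ)) → ℝ // IsPMF νz} =>
        if SubConsistent z.2.1.1 z.2.2.1 ∧ marg z.2.2.1 = z.1.1 then
          relEntC z.2.2.1 (Qof z.2.1.1 (marg z.2.2.1))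
        else (⊤ : EReal)) := by
  refine lowerSemicontinuous_of_eqOn_of_eq_top isClosed_setOf_subConsistent_and_marg_eq
    lowerSemicontinuous_relEntC_Qof (fun z ⟨hsub, hmarg⟩ => ?_) fun z hz => if_neg hz
  rw [if_pos ⟨hsub, hmarg⟩, hmarg]

open Classical in
/-- Lemma 5.2: the function `J̃` is lower semicontinuous on
`M(𝒳) × M̃_*(𝒳×𝒳) × M(𝒳×ℕ^𝒳)`. -/
theorem Jtilde_lsc (𝒳 : Type) [Fintype 𝒳] [DecidableEq 𝒳] :
    LowerSemicontinuous
      (fun z : {ωz : 𝒳 → ℝ // (∀ a, 0 ≤ ωz a) ∧ (∑ a, ωz a) = 1} ×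
          {ϖz : 𝒳 → 𝒳 → ℝ // (∀ a b, 0 ≤ ϖz a b) ∧ ∀ a b, ϖz a b = ϖz b a} ×
          {νz : (𝒳 × (𝒳 → ℕ)) → ℝ // IsPMF νz} =>
        if SubConsistent z.2.1.1 z.2.2.1 ∧ marg z.2.2.1 = z.1.1 then
          relEntC z.2.2.1 (Qof z.2.1.1 (marg z.2.2.1))
        else (⊤ : EReal)) :=
  Jtilde_lsc_general 𝒳

end ColoredLDP
end
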